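/- arXiv:2106.14564 — 10 statements merged into one kernel-verified Lean document; each statement's English description precedes it below -/
import Mathlib

section
/- Let q ≥ 2 and n ≥ 3 be integers with n odd, m := (q^n+1)/(q+1) and M := (m−1)/(q²−q). Then Σ_{β=0}^{m−1} Σ_{ℓ=0}^{q} ( −mℓ − β + (⌈β/M⌉ + ℓ)mq + β(q²−q) ) = (1/2)(q^n+1)(q−1)(q^{n+1}+q^n−q²). -/
lemma gauss_aux (n : ℕ) : 2 * ∑ i ∈ Finset.range n, (i : ℤ) = n * (n - 1) := by
  induction n with
  | zero => simp
  | succ k ih =>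
    rw [Finset.sum_range_succ]
    push_cast
    push_cast at ih
    ring_nf
    ring_nf at ih
    linarith

lemma ceil_sum_aux (M : ℕ) (hM : 1 ≤ M) : ∀ K : ℕ,
    2 * ∑ β ∈ Finset.range (M * K + 1), ⌈(β : ℚ) / (M : ℚ)⌉
      = (M : ℤ) * K * (K + 1) := by
  intro K
  induction K with
  | zero => simp
  | succ k ih =>
    have hMQ : (0 : ℚ) < (M : ℚ) := by exact_mod_cast hM
    have hsplit : M * (k + 1) + 1 = (M * k + 1) + M := by ring
    rw [hsplit, Finset.sum_range_add, mul_add, ih]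
    have hceil : ∀ i ∈ Finset.range M,
        ⌈((M * k + 1 + i : ℕ) : ℚ) / (M : ℚ)⌉ = (k : ℤ) + 1 := by
      intro i hi
      simp only [Finset.mem_range] at hi
      rw [Int.ceil_eq_iff]
      constructor
      · rw [lt_div_iff₀ hMQ]
        push_cast
        nlinarith
      · rw [div_le_iff₀ hMQ]
        have hi' : (i : ℚ) + 1 ≤ (M : ℚ) := by exact_mod_cast hi
        push_cast
        nlinarith
    rw [Finset.sum_congr rfl hceil, Finset.sum_const, Finset.card_range]
    push_cast
    ring

/-- Let `q ≥ 2`, `n ≥ 3` odd, `m = (q^n+1)/(q+1)`, `M = (m-1)/(q²-q)`. Then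
`∑_{β=0}^{m-1} ∑_{ℓ=0}^{q} (-mℓ - β + (⌈β/M⌉ + ℓ)mq + β(q²-q))
  = (1/2)(q^n+1)(q-1)(q^{n+1}+q^n-q²)`. -/
theorem stmt_7 (q n m M : ℕ) (hq : 2 ≤ q) (hn : 3 ≤ n) (hodd : Odd n)
    (hm : m * (q + 1) = q ^ n + 1) (hM : M * (q ^ 2 - q) = m - 1) :
    ((∑ β ∈ Finset.range m, ∑ ℓ ∈ Finset.range (q + 1),
        (-(m : ℤ) * ℓ - β + (⌈(β : ℚ) / (M : ℚ)⌉ + (ℓ : ℤ)) * ((m : ℤ) * q)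
          + (β : ℤ) * ((q : ℤ) ^ 2 - q)) : ℤ) : ℚ)
      = (1 / 2) * ((q : ℚ) ^ n + 1) * ((q : ℚ) - 1)
          * ((q : ℚ) ^ (n + 1) + (q : ℚ) ^ n - (q : ℚ) ^ 2) := by
  have hqq : q ≤ q ^ 2 := by nlinarith
  have hm1 : 1 ≤ m := by
    rcases Nat.eq_zero_or_pos m with h | h
    · subst h; simp at hm
    · exact h
  have hM1 : 1 ≤ M := by
    rcases Nat.eq_zero_or_pos M with h | h
    · exfalso
      subst h
      simp at hM
      have hm' : m = 1 := by omega
      subst hm'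
      have h3 : q ^ 3 ≤ q ^ n := Nat.pow_le_pow_right (by omega) hn
      have h4 : q < q ^ 3 := by nlinarith
      simp at hm
      nlinarith
    · exact h
  have hmEq : m = M * (q ^ 2 - q) + 1 := by rw [hM]; omega
  -- abbreviations for the three basic sums
  set B : ℤ := ∑ β ∈ Finset.range m, (β : ℤ) with hB
  set S : ℤ := ∑ β ∈ Finset.range m, ⌈(β : ℚ) / (M : ℚ)⌉ with hS
  set G : ℤ := ∑ ℓ ∈ Finset.range (q + 1), (ℓ : ℤ) with hG
  -- inner sum evaluation
  have step1 : ∀ β : ℕ,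
      (∑ ℓ ∈ Finset.range (q + 1),
        (-(m : ℤ) * ℓ - β + (⌈(β : ℚ) / (M : ℚ)⌉ + (ℓ : ℤ)) * ((m : ℤ) * q)
          + (β : ℤ) * ((q : ℤ) ^ 2 - q)))
      = ((q : ℤ) + 1) * (-(β : ℤ) + ⌈(β : ℚ) / (M : ℚ)⌉ * ((m : ℤ) * q)
          + (β : ℤ) * ((q : ℤ) ^ 2 - q))
        + G * ((m : ℤ) * q - m) := by
    intro β
    have : ∀ ℓ ∈ Finset.range (q + 1),
        (-(m : ℤ) * ℓ - β + (⌈(β : ℚ) / (M : ℚ)⌉ + (ℓ : ℤ)) * ((m : ℤ) * q)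
          + (β : ℤ) * ((q : ℤ) ^ 2 - q))
        = (-(β : ℤ) + ⌈(β : ℚ) / (M : ℚ)⌉ * ((m : ℤ) * q)
            + (β : ℤ) * ((q : ℤ) ^ 2 - q)) + (ℓ : ℤ) * ((m : ℤ) * q - m) := by
      intro ℓ _
      ring
    rw [Finset.sum_congr rfl this, Finset.sum_add_distrib, Finset.sum_const,
      Finset.card_range, ← Finset.sum_mul, ← hG]
    push_cast
    ring
  have step2 :
      (∑ β ∈ Finset.range m, ∑ ℓ ∈ Finset.range (q + 1),
        (-(m : ℤ) * ℓ - β + (⌈(β : ℚ) / (M : ℚ)⌉ + (ℓ : ℤ)) * ((m : ℤ) * q)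
          + (β : ℤ) * ((q : ℤ) ^ 2 - q)))
      = ((q : ℤ) + 1) * (-B + S * ((m : ℤ) * q) + B * ((q : ℤ) ^ 2 - q))
        + (m : ℤ) * (G * ((m : ℤ) * q - m)) := by
    rw [Finset.sum_congr rfl (fun β _ => step1 β), Finset.sum_add_distrib,
      Finset.sum_const, Finset.card_range, ← Finset.mul_sum,
      Finset.sum_add_distrib, Finset.sum_add_distrib, ← Finset.sum_mul,
      ← Finset.sum_mul, ← Finset.sum_neg_distrib, ← hB, ← hS]
    push_cast
    ring
  have h2B : 2 * B = (m : ℤ) * ((m : ℤ) - 1) := by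
    have := gauss_aux m; rw [← hB] at this; exact this
  have h2G : 2 * G = ((q : ℤ) + 1) * q := by
    have := gauss_aux (q + 1); rw [← hG] at this; push_cast at this; linarith
  have h2S : 2 * S = (M : ℤ) * ((q : ℤ) ^ 2 - q) * (((q : ℤ) ^ 2 - q) + 1) := by
    have := ceil_sum_aux M hM1 (q ^ 2 - q)
    rw [← hmEq, ← hS] at this
    rw [this]
    have : ((q ^ 2 - q : ℕ) : ℤ) = (q : ℤ) ^ 2 - q := by
      push_cast [Nat.cast_sub hqq]; ring
    rw [this]
  -- cast the key identities to ℚ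
  rw [step2]
  have hmQ : (m : ℚ) * ((q : ℚ) + 1) = (q : ℚ) ^ n + 1 := by exact_mod_cast hm
  have hMQ : (M : ℚ) * ((q : ℚ) ^ 2 - q) = (m : ℚ) - 1 := by
    have h1 : ((M * (q ^ 2 - q) : ℕ) : ℚ) = ((m - 1 : ℕ) : ℚ) := by rw [hM]
    rw [Nat.cast_mul, Nat.cast_sub hqq, Nat.cast_sub hm1, Nat.cast_pow] at h1
    exact_mod_cast h1
  have h2BQ : 2 * (B : ℚ) = (m : ℚ) * ((m : ℚ) - 1) := by exact_mod_cast h2B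
  have h2GQ : 2 * (G : ℚ) = ((q : ℚ) + 1) * q := by exact_mod_cast h2G
  have h2SQ : 2 * (S : ℚ) = (M : ℚ) * ((q : ℚ) ^ 2 - q) * (((q : ℚ) ^ 2 - q) + 1) := by
    exact_mod_cast h2S
  have hP : (q : ℚ) ^ n = (m : ℚ) * ((q : ℚ) + 1) - 1 := by linarith
  rw [pow_succ, hP]
  push_cast
  linear_combination (((q : ℚ) + 1) * ((q : ℚ) ^ 2 - q - 1) / 2) * h2BQ
    + (((q : ℚ) + 1) * (m : ℚ) * q / 2) * h2SQ
    + ((m : ℚ) * (m : ℚ) * ((q : ℚ) - 1) / 2) * h2GQ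
    + (((q : ℚ) + 1) * (m : ℚ) * q * ((q : ℚ) ^ 2 - q + 1) / 2) * hMQ
    + ((q : ℚ) * (m : ℚ) * ((q : ℚ) ^ 2 - 1) / 2) * hmQ
end

section
/- Let q ≥ 2 and n ≥ 3 be integers with n odd, m := (q^n+1)/(q+1), M := (m−1)/(q²−q), g := (1/2)(q−1)(q^{n+1}+q^n−q²), and let τ̃ : ℤ → ℤ be defined as follows: for i ∈ ℤ, let (k, ℓ, β) ∈ ℤ³ be the unique triple with i = −k(q^n+1) − ℓm − β, 0 ≤ β < m and 0 ≤ ℓ < q+1, let γ := ⌈β/M⌉, and set τ̃(i) := k(q^n+1) + (γ+ℓ)mq + β(q²−q). Then for every c ∈ ℤ, Σ_{i=c}^{c+q^n} (i + τ̃(i)) = (q^n+1)·g. -/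
lemma doubleSum (f : ℕ → ℤ) (a b : ℕ) :
    ∑ x ∈ Finset.range (a * b), f x
      = ∑ j ∈ Finset.range a, ∑ r ∈ Finset.range b, f (j * b + r) := by
  induction a with
  | zero => simp
  | succ a ih =>
    rw [Finset.sum_range_succ, ← ih, Nat.succ_mul, Finset.range_eq_Ico,
      ← Finset.sum_Ico_consecutive f (Nat.zero_le (a * b)) (Nat.le_add_right (a*b) b)]
    congr 1
    · rw [Finset.range_eq_Ico]
    · rw [Finset.sum_Ico_eq_sum_range, Nat.add_sub_cancel_left]

lemma ceil_pt (M j r : ℕ) (hM : 0 < M) (hr : r < M) :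
    ⌈((j * M + r : ℕ) : ℚ) / (M : ℚ)⌉ = (j : ℤ) + (if r = 0 then 0 else 1) := by
  have hM0 : (M : ℚ) ≠ 0 := by positivity
  push_cast
  rw [add_div, mul_div_cancel_right₀ _ hM0, add_comm, Int.ceil_add_natCast]
  rcases Nat.eq_zero_or_pos r with h | h
  · simp [h]
  · have h0 : ((r : ℚ) / M) > 0 := by positivity
    have h1 : ((r : ℚ) / M) ≤ 1 := by
      rw [div_le_one (by positivity)]; exact_mod_cast hr.le
    have hc : ⌈((r : ℚ) / M)⌉ = 1 := by
      rw [Int.ceil_eq_iff]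
      exact ⟨by push_cast; linarith, by push_cast; linarith⟩
    rw [hc, if_neg (Nat.pos_iff_ne_zero.mp h)]
    ring

lemma ceil_sum (M T : ℕ) (hM : 0 < M) (hT : 0 < T) :
    (∑ β ∈ Finset.range (M * T + 1), ⌈(β : ℚ) / (M : ℚ)⌉) * 2
      = (M : ℤ) * T * (T + 1) := by
  have hM0 : (M : ℚ) ≠ 0 := by positivity
  have hT2 : (∑ j ∈ Finset.range T, (j : ℤ)) * 2 = (T : ℤ) * ((T : ℤ) - 1) := by
    have h := Finset.sum_range_id_mul_two T
    have h2 : ((∑ i ∈ Finset.range T, i : ℕ) : ℤ) * 2 = ((T * (T - 1) : ℕ) : ℤ) := by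
      exact_mod_cast congrArg (Nat.cast : ℕ → ℤ) h
    push_cast [Nat.cast_sub hT] at h2
    convert h2 using 2
  rw [Finset.sum_range_succ, mul_comm M T, doubleSum (fun x => ⌈((x:ℕ) : ℚ) / (M : ℚ)⌉) T M]
  have hlast : ⌈((T * M : ℕ) : ℚ) / (M : ℚ)⌉ = (T : ℤ) := by
    push_cast
    rw [mul_div_assoc, div_self hM0, mul_one, Int.ceil_natCast]
  rw [hlast]
  have hinner : ∀ j ∈ Finset.range T,
      (∑ r ∈ Finset.range M, ⌈((j * M + r : ℕ) : ℚ) / (M : ℚ)⌉)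
        = (M : ℤ) * j + ((M : ℤ) - 1) := by
    intro j _
    rw [Finset.sum_congr rfl fun r hr => ceil_pt M j r hM (Finset.mem_range.mp hr)]
    rw [Finset.sum_add_distrib, Finset.sum_const, Finset.card_range, nsmul_eq_mul]
    have hite : (∑ r ∈ Finset.range M, if r = 0 then (0:ℤ) else 1) = (M : ℤ) - 1 := by
      have e : ∀ r, (if r = 0 then (0:ℤ) else 1) = 1 - (if r = 0 then 1 else 0) := by
        intro r; split <;> ring
      rw [Finset.sum_congr rfl fun r _ => e r, Finset.sum_sub_distrib, Finset.sum_const,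
        Finset.card_range, nsmul_eq_mul, mul_one,
        Finset.sum_ite_eq' (Finset.range M) 0 (fun _ => (1:ℤ))]
      simp [hM]
    rw [hite]
  rw [Finset.sum_congr rfl hinner, Finset.sum_add_distrib, Finset.sum_const,
    Finset.card_range, nsmul_eq_mul, ← Finset.mul_sum]
  linear_combination (M : ℤ) * hT2

lemma const_window (f : ℤ → ℤ) (P : ℤ) (hP : 0 ≤ P)
    (hper : ∀ i : ℤ, f (i + (P + 1)) = f i) :
    ∀ c : ℤ, ∑ i ∈ Finset.Icc c (c + P), f i = ∑ i ∈ Finset.Icc 0 P, f i := by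
  have hstep : ∀ c : ℤ, ∑ i ∈ Finset.Icc (c + 1) (c + 1 + P), f i
      = ∑ i ∈ Finset.Icc c (c + P), f i := by
    intro c
    have h1 : Finset.Icc c (c + P) = insert c (Finset.Icc (c + 1) (c + P)) := by
      ext x; simp only [Finset.mem_Icc, Finset.mem_insert]; omega
    have h2 : Finset.Icc (c + 1) (c + 1 + P)
        = insert (c + 1 + P) (Finset.Icc (c + 1) (c + P)) := by
      ext x; simp only [Finset.mem_Icc, Finset.mem_insert]; omega
    have hc : c ∉ Finset.Icc (c + 1) (c + P) := by simp
    have hc2 : c + 1 + P ∉ Finset.Icc (c + 1) (c + P) := by simp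
    rw [h1, h2, Finset.sum_insert hc, Finset.sum_insert hc2,
      show c + 1 + P = c + (P + 1) by ring, hper]
  intro c
  induction c using Int.induction_on with
  | zero => simp
  | succ k ih => rw [hstep, ih]
  | pred k ih =>
    have h := hstep (-(k : ℤ) - 1)
    rw [show (-(k:ℤ) - 1 + 1) = -(k:ℤ) by ring] at h
    rw [← h, ih]

/-- Let `q ≥ 2`, `n ≥ 3` odd, `m = (q^n+1)/(q+1)`, `M = (m-1)/(q²-q)`,
`g = (1/2)(q-1)(q^{n+1}+q^n-q²)`, and let `τ̃ : ℤ → ℤ` be the map sending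
`i = -k(q^n+1) - ℓm - β` (with `0 ≤ β < m`, `0 ≤ ℓ < q+1`) to
`k(q^n+1) + (⌈β/M⌉ + ℓ)mq + β(q²-q)`. Then for every `c ∈ ℤ`,
`∑_{i=c}^{c+q^n} (i + τ̃ i) = (q^n+1) g`. -/
theorem stmt_8 (q n m M : ℕ) (g : ℤ) (hq : 2 ≤ q) (hn : 3 ≤ n) (hodd : Odd n)
    (hm : m * (q + 1) = q ^ n + 1) (hM : M * (q ^ 2 - q) = m - 1)
    (hg : 2 * g = ((q : ℤ) - 1) * ((q : ℤ) ^ (n + 1) + (q : ℤ) ^ n - (q : ℤ) ^ 2))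
    (tτ : ℤ → ℤ)
    (htτ : ∀ i k ℓ β : ℤ, i = -(k * ((q : ℤ) ^ n + 1)) - ℓ * (m : ℤ) - β →
      0 ≤ β → β < (m : ℤ) → 0 ≤ ℓ → ℓ < (q : ℤ) + 1 →
      tτ i = k * ((q : ℤ) ^ n + 1) + (⌈(β : ℚ) / (M : ℚ)⌉ + ℓ) * ((m : ℤ) * q)
        + β * ((q : ℤ) ^ 2 - q)) :
    ∀ c : ℤ, ∑ i ∈ Finset.Icc c (c + (q : ℤ) ^ n), (i + tτ i) = ((q : ℤ) ^ n + 1) * g := by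
  -- basic positivity facts
  have hq1 : (1:ℤ) < (q:ℤ) := by exact_mod_cast hq
  have hqq : q ≤ q ^ 2 := by nlinarith
  have hqn3 : q ^ 3 ≤ q ^ n := Nat.pow_le_pow_right (by omega) hn
  have hq3 : q < q ^ 3 := by nlinarith
  have hmpos : 0 < m := by
    rcases Nat.eq_zero_or_pos m with h | h
    · subst h; simp at hm
    · exact h
  have hmne1 : m ≠ 1 := by
    rintro rfl
    simp at hm
    omega
  have hm2 : 2 ≤ m := by omega
  have hMpos : 0 < M := by
    rcases Nat.eq_zero_or_pos M with h | h
    · subst h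
      simp at hM
      omega
    · exact h
  have hqlt : q < q ^ 2 := by nlinarith
  have hTpos : 0 < q ^ 2 - q := by omega
  have hNZ : (m : ℤ) * ((q:ℤ) + 1) = (q:ℤ) ^ n + 1 := by exact_mod_cast hm
  have hMZ : (M : ℤ) * ((q:ℤ) ^ 2 - (q:ℤ)) = (m : ℤ) - 1 := by
    have := hM
    zify [hqq, hmpos] at this
    exact this
  have hPpos : (0:ℤ) < (q:ℤ) ^ n := by positivity
  -- decomposition existence
  have hdec : ∀ i : ℤ, ∃ k ℓ β : ℤ,
      i = -(k * ((q : ℤ) ^ n + 1)) - ℓ * (m : ℤ) - β ∧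
      0 ≤ β ∧ β < (m : ℤ) ∧ 0 ≤ ℓ ∧ ℓ < (q : ℤ) + 1 := by
    intro i
    have hNpos : (0:ℤ) < (q:ℤ) ^ n + 1 := by positivity
    have hmZ : (0:ℤ) < (m:ℤ) := by exact_mod_cast hmpos
    refine ⟨(-i) / ((q:ℤ)^n + 1), ((-i) % ((q:ℤ)^n + 1)) / m,
      ((-i) % ((q:ℤ)^n + 1)) % m, ?_, ?_, ?_, ?_, ?_⟩
    · have h1 := Int.mul_ediv_add_emod (-i) ((q:ℤ)^n + 1)
      have h2 := Int.mul_ediv_add_emod ((-i) % ((q:ℤ)^n + 1)) (m:ℤ)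
      linarith [h1, h2]
    · exact Int.emod_nonneg _ (ne_of_gt hmZ)
    · exact Int.emod_lt_of_pos _ hmZ
    · exact Int.ediv_nonneg (Int.emod_nonneg _ (ne_of_gt hNpos)) hmZ.le
    · have hr : (-i) % ((q:ℤ)^n + 1) < (q:ℤ)^n + 1 := Int.emod_lt_of_pos _ hNpos
      have hr2 : (-i) % ((q:ℤ)^n + 1) < ((q:ℤ) + 1) * m := by
        rw [mul_comm]; rw [hNZ]; exact hr
      exact Int.ediv_lt_iff_lt_mul hmZ |>.mpr hr2
  -- periodicity
  have hper : ∀ i : ℤ, (i + ((q:ℤ)^n + 1)) + tτ (i + ((q:ℤ)^n + 1)) = i + tτ i := by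
    intro i
    obtain ⟨k, ℓ, β, heq, h1, h2, h3, h4⟩ := hdec i
    have e1 := htτ i k ℓ β heq h1 h2 h3 h4
    have e2 := htτ (i + ((q:ℤ)^n + 1)) (k - 1) ℓ β (by linear_combination heq) h1 h2 h3 h4
    rw [e1, e2]; ring
  intro c
  have hconst := const_window (fun i => i + tτ i) ((q:ℤ)^n) hPpos.le hper
  rw [hconst c, ← hconst (-(q:ℤ)^n)]
  rw [show (-(q:ℤ)^n + (q:ℤ)^n) = 0 by ring]
  -- reindex Icc (-P) 0 by naturals
  have hmap : Finset.Icc (-(q:ℤ)^n) 0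
      = Finset.map ⟨fun x : ℕ => -(x:ℤ), show Function.Injective (fun x : ℕ => -(x:ℤ)) from by intro a b h; simpa using h⟩
          (Finset.range (q ^ n + 1)) := by
    ext i
    simp only [Finset.mem_Icc, Finset.mem_map, Finset.mem_range, Function.Embedding.coeFn_mk]
    constructor
    · intro h
      refine ⟨(-i).toNat, ?_, ?_⟩
      · have : ((q:ℤ))^n = ((q^n : ℕ) : ℤ) := by push_cast; ring
        omega
      · omega
    · rintro ⟨x, hx, rfl⟩
      have : ((q:ℤ))^n = ((q^n : ℕ) : ℤ) := by push_cast; ring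
      omega
  rw [hmap, Finset.sum_map]
  simp only [Function.Embedding.coeFn_mk]
  rw [show q ^ n + 1 = (q + 1) * m by rw [← hm, Nat.mul_comm]]
  rw [doubleSum (fun x => -(x:ℤ) + tτ (-(x:ℤ))) (q+1) m]
  -- pointwise value
  have hval : ∀ ℓ ∈ Finset.range (q+1), ∀ β ∈ Finset.range m,
      (-((ℓ * m + β : ℕ):ℤ) + tτ (-((ℓ * m + β : ℕ):ℤ)))
        = (ℓ:ℤ) * ((m:ℤ) * q - m) + (β:ℤ) * ((q:ℤ)^2 - q - 1)
          + ⌈((β:ℕ) : ℚ) / (M : ℚ)⌉ * ((m:ℤ) * q) := by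
    intro ℓ hℓ β hβ
    have hℓ' := Finset.mem_range.mp hℓ
    have hβ' := Finset.mem_range.mp hβ
    have h := htτ (-((ℓ * m + β : ℕ):ℤ)) 0 (ℓ:ℤ) (β:ℤ)
      (by push_cast; ring) (by positivity) (by exact_mod_cast hβ')
      (by positivity) (by exact_mod_cast hℓ')
    rw [h]
    push_cast
    ring
  rw [Finset.sum_congr rfl fun ℓ hℓ => Finset.sum_congr rfl fun β hβ => hval ℓ hℓ β hβ]
  -- evaluate sums
  set A : ℤ := ∑ ℓ ∈ Finset.range (q+1), (ℓ:ℤ) with hA_def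
  set B : ℤ := ∑ β ∈ Finset.range m, (β:ℤ) with hB_def
  set C : ℤ := ∑ β ∈ Finset.range m, ⌈((β:ℕ) : ℚ) / (M : ℚ)⌉ with hC_def
  have hinner : ∀ ℓ : ℕ, (∑ β ∈ Finset.range m,
      ((ℓ:ℤ) * ((m:ℤ) * q - m) + (β:ℤ) * ((q:ℤ)^2 - q - 1)
        + ⌈((β:ℕ) : ℚ) / (M : ℚ)⌉ * ((m:ℤ) * q)))
      = (m:ℤ) * ((ℓ:ℤ) * ((m:ℤ) * q - m)) + B * ((q:ℤ)^2 - q - 1) + C * ((m:ℤ) * q) := by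
    intro ℓ
    rw [Finset.sum_add_distrib, Finset.sum_add_distrib, Finset.sum_const,
      Finset.card_range, nsmul_eq_mul, ← Finset.sum_mul, ← Finset.sum_mul]
  rw [Finset.sum_congr rfl fun ℓ _ => hinner ℓ]
  rw [Finset.sum_add_distrib, Finset.sum_add_distrib, Finset.sum_const,
    Finset.card_range, nsmul_eq_mul, Finset.sum_const, Finset.card_range, nsmul_eq_mul,
    ← Finset.mul_sum, ← Finset.sum_mul]
  -- closed forms
  have hA : A * 2 = ((q:ℤ) + 1) * q := by
    have h : (∑ i ∈ Finset.range (q+1), i) * 2 = (q+1) * q := by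
      simpa using Finset.sum_range_id_mul_two (q + 1)
    have h2 := congrArg (Nat.cast : ℕ → ℤ) h
    rw [hA_def]
    push_cast at h2
    exact h2
  have hB : B * 2 = (m:ℤ) * ((m:ℤ) - 1) := by
    have h := Finset.sum_range_id_mul_two m
    have h2 := congrArg (Nat.cast : ℕ → ℤ) h
    rw [hB_def]
    push_cast [Nat.cast_sub hmpos] at h2
    exact h2
  have hC : C * 2 = (M:ℤ) * ((q:ℤ)^2 - q) * ((q:ℤ)^2 - q + 1) := by
    have hmeq : m = M * (q^2 - q) + 1 := by omega
    have h := ceil_sum M (q^2 - q) hMpos hTpos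
    rw [hC_def, hmeq]
    convert h using 2 <;> push_cast [Nat.cast_sub hqq] <;> ring
  -- final algebra
  have hC' : C * 2 = ((m:ℤ) - 1) * ((q:ℤ)^2 - q + 1) := by
    rw [hC]; linear_combination ((q:ℤ)^2 - q + 1) * hMZ
  have hX : (q:ℤ)^n = (m:ℤ) * ((q:ℤ) + 1) - 1 := by linarith [hNZ]
  have hY : (q:ℤ)^(n+1) = ((m:ℤ) * ((q:ℤ) + 1) - 1) * q := by rw [pow_succ, hX]
  rw [hY, hX] at hg
  rw [← hA_def, hX]
  push_cast
  refine mul_right_cancel₀ (b := (2:ℤ)) (by norm_num) ?_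
  linear_combination ((m:ℤ) * ((m:ℤ) * q - m)) * hA
    + (((q:ℤ) + 1) * ((q:ℤ)^2 - q - 1)) * hB
    + (((q:ℤ) + 1) * ((m:ℤ) * q)) * hC'
    - ((m:ℤ) * ((q:ℤ) + 1)) * hg
end

section
/- Let q be a prime power, n ≥ 3 an odd integer, m := (q^n+1)/(q+1), M := (m−1)/(q²−q), and let τ̃ : ℤ → ℤ be defined as follows: for i ∈ ℤ, let (k, ℓ, β) ∈ ℤ³ be the unique triple with i = −k(q^n+1) − ℓm − β, 0 ≤ β < m and 0 ≤ ℓ < q+1, let γ := ⌈β/M⌉, and set τ̃(i) := k(q^n+1) + (γ+ℓ)mq + β(q²−q). Then τ̃ is a bijection of ℤ onto ℤ. -/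
set_option maxHeartbeats 800000

private lemma eu (b a r x : ℤ) (hb : 0 < b) (h0 : 0 ≤ r) (hr : r < b)
    (hx : x = b * a + r) : x / b = a ∧ x % b = r := by
  subst hx
  constructor
  · rw [add_comm, mul_comm, Int.add_mul_ediv_right _ _ hb.ne',
      Int.ediv_eq_zero_of_lt h0 hr, zero_add]
  · rw [add_comm, Int.add_mul_emod_self_left, Int.emod_eq_of_lt h0 hr]

/-- Let `q` be a prime power, `n ≥ 3` odd, `m = (q^n+1)/(q+1)`, `M = (m-1)/(q²-q)`,
and let `τ̃ : ℤ → ℤ` be the map sending `i = -k(q^n+1) - ℓm - β` (with `0 ≤ β < m`,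
`0 ≤ ℓ < q+1`) to `k(q^n+1) + (⌈β/M⌉ + ℓ)mq + β(q²-q)`. Then `τ̃` is a bijection. -/
theorem stmt_9 (q n m M : ℕ) (hq : IsPrimePow q) (hn : 3 ≤ n) (hodd : Odd n)
    (hm : m * (q + 1) = q ^ n + 1) (hM : M * (q ^ 2 - q) = m - 1)
    (tτ : ℤ → ℤ)
    (htτ : ∀ i k ℓ β : ℤ, i = -(k * ((q : ℤ) ^ n + 1)) - ℓ * (m : ℤ) - β →
      0 ≤ β → β < (m : ℤ) → 0 ≤ ℓ → ℓ < (q : ℤ) + 1 →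
      tτ i = k * ((q : ℤ) ^ n + 1) + (⌈(β : ℚ) / (M : ℚ)⌉ + ℓ) * ((m : ℤ) * q)
        + β * ((q : ℤ) ^ 2 - q)) :
    Function.Bijective tτ := by
  -- basic numeric facts
  have hq2 : (2:ℤ) ≤ (q:ℤ) := by exact_mod_cast hq.two_le
  have hqq : q ≤ q^2 := by nlinarith [hq.two_le]
  have hm1 : 1 ≤ m := by
    rcases Nat.eq_zero_or_pos m with h | h
    · subst h; simp at hm
    · exact h
  set D : ℤ := (q:ℤ)^2 - (q:ℤ) with hDd
  set N : ℤ := (q:ℤ)^n + 1 with hNd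
  have hD : (0:ℤ) < D := by rw [hDd]; nlinarith
  have hN : (0:ℤ) < N := by rw [hNd]; positivity
  have hmN : (m:ℤ) * ((q:ℤ) + 1) = N := by rw [hNd]; exact_mod_cast hm
  have hMD : (M:ℤ) * D = (m:ℤ) - 1 := by
    rw [hDd]; zify [hqq, hm1] at hM; exact_mod_cast hM
  have hQn : (q:ℤ)^3 ≤ (q:ℤ)^n := pow_le_pow_right₀ (by linarith) hn
  have hm2 : (2:ℤ) ≤ (m:ℤ) := by nlinarith
  have hmz : (0:ℤ) < (m:ℤ) := by linarith
  have hM1 : (1:ℤ) ≤ (M:ℤ) := by nlinarith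
  have hMQ : (0:ℚ) < (M:ℚ) := by exact_mod_cast (by linarith : (0:ℤ) < (M:ℤ))
  -- ceiling facts
  have ceil_eq : ∀ β γ : ℤ, γ * M - M < β → β ≤ γ * M → ⌈(β:ℚ)/(M:ℚ)⌉ = γ := by
    intro β γ h1 h2
    rw [Int.ceil_eq_iff]
    constructor
    · rw [lt_div_iff₀ hMQ]
      have hc : ((γ * M - M : ℤ) : ℚ) < ((β:ℤ) : ℚ) := by exact_mod_cast h1
      push_cast at hc ⊢
      nlinarith [hc]
    · rw [div_le_iff₀ hMQ]
      exact_mod_cast h2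
  have ceil_bd : ∀ β : ℤ, ⌈(β:ℚ)/(M:ℚ)⌉ * M - M < β ∧ β ≤ ⌈(β:ℚ)/(M:ℚ)⌉ * M := by
    intro β
    have h1 := Int.le_ceil ((β:ℚ)/(M:ℚ))
    have h2 := Int.ceil_lt_add_one ((β:ℚ)/(M:ℚ))
    constructor
    · have h3 : ((⌈(β:ℚ)/(M:ℚ)⌉:ℚ) - 1) < (β:ℚ)/(M:ℚ) := by linarith
      rw [lt_div_iff₀ hMQ] at h3
      have h4 : ((⌈(β:ℚ)/(M:ℚ)⌉ * M - M : ℤ) : ℚ) < ((β:ℤ):ℚ) := by push_cast; nlinarith [h3]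
      exact_mod_cast h4
    · rw [div_le_iff₀ hMQ] at h1
      have h4 : ((β:ℤ):ℚ) ≤ ((⌈(β:ℚ)/(M:ℚ)⌉ * M : ℤ) : ℚ) := by push_cast; nlinarith [h1]
      exact_mod_cast h4
  -- bounds on γ + s * D for admissible pairs
  have hwb : ∀ γ s : ℤ, ((γ = 0 ∧ s = 0) ∨ (1 ≤ γ ∧ γ ≤ D ∧ 0 ≤ s ∧ s < M)) →
      0 ≤ γ + s * D ∧ γ + s * D < (m:ℤ) := by
    rintro γ s (⟨rfl, rfl⟩ | ⟨hγ1, hγD, hs0, hsM⟩)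
    · constructor
      · simp
      · simpa using hmz
    · have hsD : s * D ≤ ((M:ℤ) - 1) * D :=
        mul_le_mul_of_nonneg_right (by linarith) hD.le
      have hr : ((M:ℤ)-1)*D = (M:ℤ)*D - D := by ring
      constructor
      · linarith [mul_nonneg hs0 hD.le]
      · linarith [hsD, hMD, hr, hγD]
  -- key decomposition of tτ
  have key : ∀ i : ℤ, ∃ k ℓ γ s : ℤ,
      (0 ≤ ℓ ∧ ℓ < (q:ℤ) + 1) ∧
      ((γ = 0 ∧ s = 0) ∨ (1 ≤ γ ∧ γ ≤ D ∧ 0 ≤ s ∧ s < M)) ∧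
      i = -(k * N) - ℓ * (m:ℤ) - (γ * M - s) ∧
      tτ i = (k + γ + ℓ) * N - (γ + ℓ * (m:ℤ) + s * D) := by
    intro i
    set k := (-i) / N with hkd
    set r := (-i) % N with hrd
    have hr0 : 0 ≤ r := Int.emod_nonneg _ hN.ne'
    have hrN : r < N := Int.emod_lt_of_pos _ hN
    have hdec1 : N * k + r = -i := Int.mul_ediv_add_emod _ _
    set ℓ := r / (m:ℤ) with hld
    set β := r % (m:ℤ) with hbd
    have hβ0 : 0 ≤ β := Int.emod_nonneg _ hmz.ne'
    have hβm : β < (m:ℤ) := Int.emod_lt_of_pos _ hmz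
    have hdec2 : (m:ℤ) * ℓ + β = r := Int.mul_ediv_add_emod _ _
    have hℓ0 : 0 ≤ ℓ := Int.ediv_nonneg hr0 hmz.le
    have hℓq : ℓ < (q:ℤ) + 1 := by
      rw [hld, Int.ediv_lt_iff_lt_mul hmz]
      nlinarith [hrN, hmN]
    set γ := ⌈(β:ℚ)/(M:ℚ)⌉ with hγd
    set s := γ * M - β with hsd
    obtain ⟨hc1, hc2⟩ := ceil_bd β
    rw [← hγd] at hc1 hc2
    have hs0 : 0 ≤ s := by rw [hsd]; linarith
    have hsM : s < M := by rw [hsd]; linarith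
    have hieq : i = -(k * N) - ℓ * (m:ℤ) - β := by linear_combination hdec1 + hdec2
    have ht := htτ i k ℓ β hieq hβ0 hβm hℓ0 hℓq
    rw [← hγd] at ht
    have hγ0 : 0 ≤ γ := by
      by_contra h
      push_neg at h
      have h2 : γ * (M:ℤ) ≤ (-1) * (M:ℤ) := mul_le_mul_of_nonneg_right (by omega) (by linarith)
      have h3 : (-1 : ℤ) * (M:ℤ) = -(M:ℤ) := by ring
      linarith
    refine ⟨k, ℓ, γ, s, ⟨hℓ0, hℓq⟩, ?_, by linear_combination hieq - hsd, ?_⟩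
    · rcases eq_or_lt_of_le hβ0 with h0 | h1
      · left
        have hγz : γ = 0 := by
          by_contra h
          have h1 : 1 ≤ γ := by omega
          have h2 : 1 * (M:ℤ) ≤ γ * (M:ℤ) := mul_le_mul_of_nonneg_right h1 (by linarith)
          rw [one_mul] at h2
          linarith
        refine ⟨hγz, ?_⟩
        rw [hsd, hγz, ← h0]
        ring
      · right
        have hγ1 : 1 ≤ γ := by
          by_contra h
          have hz : γ = 0 := by omega
          rw [hz, zero_mul] at hc2
          linarith
        have hγD : γ ≤ D := by
          by_contra h
          push_neg at h
          have h2 : (D + 1) * (M:ℤ) ≤ γ * (M:ℤ) :=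
            mul_le_mul_of_nonneg_right (by omega) (by linarith)
          have h3 : (D + 1) * (M:ℤ) = (M:ℤ) * D + M := by ring
          linarith [hc1, hβm, hMD]
        exact ⟨hγ1, hγD, hs0, hsM⟩
    · linear_combination ht + (γ + ℓ) * hmN + γ * hMD + D * hsd
  -- recovery / uniqueness of the decomposition data from the residue
  have recov : ∀ ℓ γ s ℓ' γ' s' : ℤ,
      (0 ≤ ℓ ∧ ℓ < (q:ℤ)+1) →
      ((γ = 0 ∧ s = 0) ∨ (1 ≤ γ ∧ γ ≤ D ∧ 0 ≤ s ∧ s < M)) →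
      (0 ≤ ℓ' ∧ ℓ' < (q:ℤ)+1) →
      ((γ' = 0 ∧ s' = 0) ∨ (1 ≤ γ' ∧ γ' ≤ D ∧ 0 ≤ s' ∧ s' < M)) →
      γ + ℓ * (m:ℤ) + s * D = γ' + ℓ' * (m:ℤ) + s' * D →
      ℓ = ℓ' ∧ γ = γ' ∧ s = s' := by
    intro ℓ γ s ℓ' γ' s' h1 h2 h1' h2' heq
    obtain ⟨hw0, hwm⟩ := hwb γ s h2
    obtain ⟨hw0', hwm'⟩ := hwb γ' s' h2'
    have e1 := eu (m:ℤ) ℓ (γ + s*D) (γ + ℓ*(m:ℤ) + s*D) hmz hw0 hwm (by ring)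
    have e2 := eu (m:ℤ) ℓ' (γ' + s'*D) (γ + ℓ*(m:ℤ) + s*D) hmz hw0' hwm'
      (by rw [heq]; ring)
    have hℓℓ : ℓ = ℓ' := e1.1.symm.trans e2.1
    have hweq : γ + s * D = γ' + s' * D := e1.2.symm.trans e2.2
    rcases h2 with ⟨rfl, rfl⟩ | ⟨hγ1, hγD, hs0, hsM⟩
    · rcases h2' with ⟨rfl, rfl⟩ | ⟨hγ1', hγD', hs0', hsM'⟩
      · exact ⟨hℓℓ, rfl, rfl⟩
      · exfalso; linarith [hweq, mul_nonneg hs0' hD.le]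
    · rcases h2' with ⟨rfl, rfl⟩ | ⟨hγ1', hγD', hs0', hsM'⟩
      · exfalso; linarith [hweq, mul_nonneg hs0 hD.le]
      · have f1 := eu D s (γ - 1) (γ + s*D - 1) hD (by linarith) (by linarith) (by ring)
        have f2 := eu D s' (γ' - 1) (γ + s*D - 1) hD (by linarith) (by linarith)
          (by linear_combination hweq)
        have hss : s = s' := f1.1.symm.trans f2.1
        have hγγ : γ = γ' := by have := f1.2.symm.trans f2.2; linarith
        exact ⟨hℓℓ, hγγ, hss⟩
  -- main argument
  rw [Function.bijective_iff_existsUnique]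
  intro j
  set c := (-j) / N with hcd
  set g := (-j) % N with hgd
  have hg0 : 0 ≤ g := Int.emod_nonneg _ hN.ne'
  have hgN : g < N := Int.emod_lt_of_pos _ hN
  have hdecj : N * c + g = -j := Int.mul_ediv_add_emod _ _
  set ℓ := g / (m:ℤ) with hld
  set w := g % (m:ℤ) with hwd
  have hw0 : 0 ≤ w := Int.emod_nonneg _ hmz.ne'
  have hwm : w < (m:ℤ) := Int.emod_lt_of_pos _ hmz
  have hdecg : (m:ℤ) * ℓ + w = g := Int.mul_ediv_add_emod _ _
  have hℓ0 : 0 ≤ ℓ := Int.ediv_nonneg hg0 hmz.le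
  have hℓq : ℓ < (q:ℤ) + 1 := by
    rw [hld, Int.ediv_lt_iff_lt_mul hmz]
    nlinarith [hgN, hmN]
  obtain ⟨γ, s, hcon, hwgs⟩ : ∃ γ s : ℤ,
      ((γ = 0 ∧ s = 0) ∨ (1 ≤ γ ∧ γ ≤ D ∧ 0 ≤ s ∧ s < M)) ∧ w = γ + s * D := by
    rcases eq_or_lt_of_le hw0 with h0 | h1
    · exact ⟨0, 0, Or.inl ⟨rfl, rfl⟩, by rw [← h0]; ring⟩
    · refine ⟨(w-1) % D + 1, (w-1) / D, Or.inr ⟨?_, ?_, ?_, ?_⟩, ?_⟩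
      · have := Int.emod_nonneg (w-1) hD.ne'; linarith
      · have := Int.emod_lt_of_pos (w-1) hD; linarith
      · exact Int.ediv_nonneg (by linarith) hD.le
      · rw [Int.ediv_lt_iff_lt_mul hD]; nlinarith [hMD]
      · linear_combination - Int.mul_ediv_add_emod (w-1) D
  have hsb : 0 ≤ s ∧ s < (M:ℤ) := by
    rcases hcon with ⟨rfl, rfl⟩ | ⟨hγ1, hγD, hs0, hsM⟩
    · exact ⟨le_refl _, by linarith⟩
    · exact ⟨hs0, hsM⟩
  have hγ0 : 0 ≤ γ := by
    rcases hcon with ⟨rfl, rfl⟩ | ⟨hγ1, hγD, hs0, hsM⟩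
    · exact le_refl _
    · linarith
  set β := γ * M - s with hβd
  have hβ0 : 0 ≤ β := by
    rcases hcon with ⟨h, h'⟩ | ⟨hγ1, hγD, hs0, hsM⟩
    · rw [hβd, h, h']; norm_num
    · have h2 : 1 * (M:ℤ) ≤ γ * (M:ℤ) := mul_le_mul_of_nonneg_right hγ1 (by linarith)
      rw [one_mul] at h2
      rw [hβd]; linarith
  have hβm : β < (m:ℤ) := by
    rcases hcon with ⟨h, h'⟩ | ⟨hγ1, hγD, hs0, hsM⟩
    · rw [hβd, h, h']; norm_num; linarith
    · have h2 : γ * (M:ℤ) ≤ D * (M:ℤ) :=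
        mul_le_mul_of_nonneg_right hγD (by linarith)
      have h3 : D * (M:ℤ) = (M:ℤ) * D := by ring
      rw [hβd]; linarith [hMD]
  have hγceil : ⌈(β:ℚ)/(M:ℚ)⌉ = γ :=
    ceil_eq β γ (by rw [hβd]; linarith [hsb.2]) (by rw [hβd]; linarith [hsb.1])
  refine ⟨-((-c - γ - ℓ) * N) - ℓ * (m:ℤ) - β, ?_, ?_⟩
  · have ht := htτ _ (-c - γ - ℓ) ℓ β rfl hβ0 hβm hℓ0 hℓq
    rw [hγceil] at ht
    show tτ (-((-c - γ - ℓ) * N) - ℓ * (m:ℤ) - β) = j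
    rw [ht]
    linear_combination -hdecj - hdecg + hwgs + D * hβd + γ * hMD + (γ + ℓ) * hmN
  · intro i hi
    obtain ⟨k', ℓ', γ', s', ⟨hℓ0', hℓq'⟩, hcon', hieq', htf'⟩ := key i
    obtain ⟨hw0', hwm'⟩ := hwb γ' s' hcon'
    have hg0' : 0 ≤ γ' + ℓ' * (m:ℤ) + s' * D := by
      linarith [mul_nonneg hℓ0' hmz.le]
    have hgN' : γ' + ℓ' * (m:ℤ) + s' * D < N := by
      have h2 : ℓ' * (m:ℤ) ≤ (q:ℤ) * (m:ℤ) :=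
        mul_le_mul_of_nonneg_right (by linarith) hmz.le
      linarith [hmN]
    have e := eu N (-(k' + γ' + ℓ')) (γ' + ℓ' * (m:ℤ) + s' * D) (-j) hN hg0' hgN'
      (by linear_combination hi - htf')
    have hgg : γ + ℓ * (m:ℤ) + s * D = γ' + ℓ' * (m:ℤ) + s' * D := by
      rw [← e.2, ← hgd]
      linear_combination hdecg - hwgs
    obtain ⟨hℓℓ, hγγ, hss⟩ := recov ℓ γ s ℓ' γ' s' ⟨hℓ0, hℓq⟩ hcon ⟨hℓ0', hℓq'⟩ hcon' hgg
    have hkk : k' = -c - γ - ℓ := by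
      have hc' : c = -(k' + γ' + ℓ') := by rw [hcd, e.1]
      rw [hc', hγγ, hℓℓ]; ring
    rw [hieq', hkk, ← hℓℓ, ← hγγ, ← hss, hβd]
  done
end

section
/- Let q be a prime power, n ≥ 3 an odd integer, m := (q^n+1)/(q+1), M := (m−1)/(q²−q), g := (1/2)(q−1)(q^{n+1}+q^n−q²), and let τ̃ : ℤ → ℤ be defined as follows: for i ∈ ℤ, let (k, ℓ, β) ∈ ℤ³ be the unique triple with i = −k(q^n+1) − ℓm − β, 0 ≤ β < m and 0 ≤ ℓ < q+1, let γ := ⌈β/M⌉, and set τ̃(i) := k(q^n+1) + (γ+ℓ)mq + β(q²−q). Then −i ≤ τ̃(i) ≤ 2g − i for all i ∈ ℤ. -/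
set_option maxHeartbeats 1000000 in
/-- Let `q` be a prime power, `n ≥ 3` odd, `m = (q^n+1)/(q+1)`, `M = (m-1)/(q²-q)`,
`g = (1/2)(q-1)(q^{n+1}+q^n-q²)`, and let `τ̃ : ℤ → ℤ` be the map sending
`i = -k(q^n+1) - ℓm - β` (with `0 ≤ β < m`, `0 ≤ ℓ < q+1`) to
`k(q^n+1) + (⌈β/M⌉ + ℓ)mq + β(q²-q)`. Then `-i ≤ τ̃ i ≤ 2g - i` for all `i`. -/
theorem stmt_10 (q n m M : ℕ) (g : ℤ) (hq : IsPrimePow q) (hn : 3 ≤ n) (hodd : Odd n)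
    (hm : m * (q + 1) = q ^ n + 1) (hM : M * (q ^ 2 - q) = m - 1)
    (hg : 2 * g = ((q : ℤ) - 1) * ((q : ℤ) ^ (n + 1) + (q : ℤ) ^ n - (q : ℤ) ^ 2))
    (tτ : ℤ → ℤ)
    (htτ : ∀ i k ℓ β : ℤ, i = -(k * ((q : ℤ) ^ n + 1)) - ℓ * (m : ℤ) - β →
      0 ≤ β → β < (m : ℤ) → 0 ≤ ℓ → ℓ < (q : ℤ) + 1 →
      tτ i = k * ((q : ℤ) ^ n + 1) + (⌈(β : ℚ) / (M : ℚ)⌉ + ℓ) * ((m : ℤ) * q)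
        + β * ((q : ℤ) ^ 2 - q)) :
    ∀ i : ℤ, -i ≤ tτ i ∧ tτ i ≤ 2 * g - i := by
  have hq2 : 2 ≤ q := hq.two_le
  have hQ2 : (2 : ℤ) ≤ (q : ℤ) := by exact_mod_cast hq2
  have hqq : q ≤ q ^ 2 := by nlinarith
  have hA : (0 : ℤ) ≤ (q : ℤ) ^ 2 - (q : ℤ) - 1 := by nlinarith
  have hm1 : 1 ≤ m := by
    rcases Nat.eq_zero_or_pos m with h | h
    · subst h; simp at hm
    · exact h
  have hmZ : (m : ℤ) * ((q : ℤ) + 1) = (q : ℤ) ^ n + 1 := by exact_mod_cast hm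
  have hMZ : (M : ℤ) * ((q : ℤ) ^ 2 - (q : ℤ)) = (m : ℤ) - 1 := by
    have := congrArg (Nat.cast : ℕ → ℤ) hM
    push_cast [Nat.cast_sub hqq, Nat.cast_sub hm1] at this
    linarith
  have hm0Z : (0 : ℤ) < (m : ℤ) := by exact_mod_cast hm1
  have hq3n : (q : ℤ) ^ 3 ≤ (q : ℤ) ^ n := by
    exact_mod_cast Nat.pow_le_pow_right (le_of_lt hq.one_lt) hn
  have hmbig : (q : ℤ) ^ 2 - (q : ℤ) + 1 ≤ (m : ℤ) := by nlinarith
  have hMpos : (0 : ℤ) < (M : ℤ) := by nlinarith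
  have hMQpos : (0 : ℚ) < (M : ℚ) := by exact_mod_cast hMpos
  intro i
  set β : ℤ := (-i) % (m : ℤ) with hβdef
  set t : ℤ := (-i) / (m : ℤ) with htdef
  set ℓ : ℤ := t % ((q : ℤ) + 1) with hℓdef
  set k : ℤ := t / ((q : ℤ) + 1) with hkdef
  have hβ0 : 0 ≤ β := Int.emod_nonneg _ (by positivity)
  have hβm : β < (m : ℤ) := Int.emod_lt_of_pos _ hm0Z
  have hℓ0 : 0 ≤ ℓ := Int.emod_nonneg _ (by positivity)
  have hℓq : ℓ < (q : ℤ) + 1 := Int.emod_lt_of_pos _ (by linarith)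
  have e1 : (m : ℤ) * t + β = -i := Int.mul_ediv_add_emod _ _
  have e2 : ((q : ℤ) + 1) * k + ℓ = t := Int.mul_ediv_add_emod _ _
  have hi : i = -(k * ((q : ℤ) ^ n + 1)) - ℓ * (m : ℤ) - β := by
    have : -i = k * ((m : ℤ) * ((q : ℤ) + 1)) + ℓ * (m : ℤ) + β := by
      rw [← e1, ← e2]; ring
    rw [hmZ] at this
    linarith
  have ht := htτ i k ℓ β hi hβ0 hβm hℓ0 hℓq
  set γ : ℤ := ⌈(β : ℚ) / (M : ℚ)⌉ with hγdef
  have hγ0 : 0 ≤ γ := Int.ceil_nonneg (div_nonneg (by exact_mod_cast hβ0) hMQpos.le)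
  have hγub : γ ≤ (q : ℤ) ^ 2 - (q : ℤ) := by
    rw [hγdef, Int.ceil_le]
    rw [div_le_iff₀ hMQpos]
    have hβle : β ≤ (m : ℤ) - 1 := by linarith
    have : (β : ℚ) ≤ ((q : ℚ) ^ 2 - (q : ℚ)) * (M : ℚ) := by
      have h2 : ((q : ℤ) ^ 2 - (q : ℤ)) * (M : ℤ) = (m : ℤ) - 1 := by linarith
      exact_mod_cast hβle.trans_eq h2.symm
    exact_mod_cast this
  have hqn : (q : ℤ) ^ n = (m : ℤ) * ((q : ℤ) + 1) - 1 := by linarith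
  have h2g : 2 * g = ((q : ℤ) - 1) *
      (((m : ℤ) * ((q : ℤ) + 1) - 1) * ((q : ℤ) + 1) - (q : ℤ) ^ 2) := by
    rw [hg, pow_succ, hqn]; ring
  constructor
  · rw [ht, hi]
    have h1 : (0 : ℤ) ≤ γ * ((m : ℤ) * (q : ℤ)) :=
      mul_nonneg hγ0 (mul_nonneg hm0Z.le (by linarith))
    have h2 : (0 : ℤ) ≤ ℓ * ((m : ℤ) * ((q : ℤ) - 1)) :=
      mul_nonneg hℓ0 (mul_nonneg hm0Z.le (by linarith))
    have h3 : (0 : ℤ) ≤ β * ((q : ℤ) ^ 2 - (q : ℤ) - 1) := mul_nonneg hβ0 hA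
    linarith [h1, h2, h3]
  · rw [ht, hi]
    have h1 : (0 : ℤ) ≤ ((q : ℤ) ^ 2 - (q : ℤ) - γ) * ((m : ℤ) * (q : ℤ)) :=
      mul_nonneg (by linarith) (mul_nonneg hm0Z.le (by linarith))
    have h2 : (0 : ℤ) ≤ ((q : ℤ) - ℓ) * ((m : ℤ) * ((q : ℤ) - 1)) :=
      mul_nonneg (by linarith) (mul_nonneg hm0Z.le (by linarith))
    have h3 : (0 : ℤ) ≤ ((m : ℤ) - 1 - β) * ((q : ℤ) ^ 2 - (q : ℤ) - 1) :=
      mul_nonneg (by linarith) hA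
    have h4 : (0 : ℤ) ≤ (q : ℤ) * ((m : ℤ) - ((q : ℤ) ^ 2 - (q : ℤ) + 1)) :=
      mul_nonneg (by linarith) (by linarith)
    linarith [h1, h2, h3, h4]
end

section
/- Let q be a prime power, n ≥ 3 an odd integer, m := (q^n+1)/(q+1), M := (m−1)/(q²−q), and let τ̃ : ℤ → ℤ be defined as follows: for i ∈ ℤ, let (k, ℓ, β) ∈ ℤ³ be the unique triple with i = −k(q^n+1) − ℓm − β, 0 ≤ β < m and 0 ≤ ℓ < q+1, let γ := ⌈β/M⌉, and set τ̃(i) := k(q^n+1) + (γ+ℓ)mq + β(q²−q). Then τ̃ is subadditive: τ̃(i₁ + i₂) ≤ τ̃(i₁) + τ̃(i₂) for all i₁, i₂ ∈ ℤ. -/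
private lemma ceil_add_le' (x y : ℚ) : ⌈x + y⌉ ≤ ⌈x⌉ + ⌈y⌉ := by
  rw [Int.ceil_le]; push_cast; exact add_le_add (Int.le_ceil x) (Int.le_ceil y)

private lemma aux0 (Q c x : ℤ) (hQ : 2 ≤ Q) (hc0 : 0 ≤ c) (hx : x ≤ 0) :
    x * Q ≤ c * (Q + 1) * (Q - 1) + 0 * (Q ^ 2 - 2 * Q) := by
  nlinarith [mul_nonneg (mul_nonneg hc0 (by linarith : (0:ℤ) ≤ Q + 1))
      (by linarith : (0:ℤ) ≤ Q - 1),
    mul_nonneg (by linarith : (0:ℤ) ≤ -x) (by linarith : (0:ℤ) ≤ Q)]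

private lemma aux1 (Q c x : ℤ) (hQ : 2 ≤ Q) (hc0 : 0 ≤ c) (hx : x ≤ -(Q ^ 2 - Q)) :
    x * Q ≤ c * (Q + 1) * (Q - 1) + 1 * (Q ^ 2 - 2 * Q) := by
  nlinarith [mul_nonneg (mul_nonneg hc0 (by linarith : (0:ℤ) ≤ Q + 1))
      (by linarith : (0:ℤ) ≤ Q - 1),
    mul_le_mul_of_nonneg_right hx (by linarith : (0:ℤ) ≤ Q),
    mul_nonneg (mul_nonneg (by linarith : (0:ℤ) ≤ Q) (by linarith : (0:ℤ) ≤ Q))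
      (by linarith : (0:ℤ) ≤ Q - 2)]

set_option maxHeartbeats 1000000 in


/-- Let `q` be a prime power, `n ≥ 3` odd, `m = (q^n+1)/(q+1)`, `M = (m-1)/(q²-q)`,
and let `τ̃ : ℤ → ℤ` be the map sending `i = -k(q^n+1) - ℓm - β` (with `0 ≤ β < m`,
`0 ≤ ℓ < q+1`) to `k(q^n+1) + (⌈β/M⌉ + ℓ)mq + β(q²-q)`. Then `τ̃` is subadditive. -/
theorem stmt_11 (q n m M : ℕ) (hq : IsPrimePow q) (hn : 3 ≤ n) (hodd : Odd n)
    (hm : m * (q + 1) = q ^ n + 1) (hM : M * (q ^ 2 - q) = m - 1)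
    (tτ : ℤ → ℤ)
    (htτ : ∀ i k ℓ β : ℤ, i = -(k * ((q : ℤ) ^ n + 1)) - ℓ * (m : ℤ) - β →
      0 ≤ β → β < (m : ℤ) → 0 ≤ ℓ → ℓ < (q : ℤ) + 1 →
      tτ i = k * ((q : ℤ) ^ n + 1) + (⌈(β : ℚ) / (M : ℚ)⌉ + ℓ) * ((m : ℤ) * q)
        + β * ((q : ℤ) ^ 2 - q)) :
    ∀ i₁ i₂ : ℤ, tτ (i₁ + i₂) ≤ tτ i₁ + tτ i₂ := by
  have hq2 : 2 ≤ q := hq.two_le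
  have hQ2 : (2:ℤ) ≤ (q:ℤ) := by exact_mod_cast hq2
  have h1 : q ^ 3 ≤ q ^ n := Nat.pow_le_pow_right (by omega) hn
  have h4 : 4 ≤ q * q := Nat.mul_le_mul hq2 hq2
  have h2 : 4 * q ≤ q ^ 3 := by
    calc 4 * q ≤ (q * q) * q := Nat.mul_le_mul_right _ h4
    _ = q ^ 3 := by ring
  have hm2 : 2 ≤ m := by nlinarith
  have hmZ2 : (2:ℤ) ≤ (m:ℤ) := by exact_mod_cast hm2
  have hmpos : (0:ℤ) < (m:ℤ) := by linarith
  have hN : (m:ℤ) * ((q:ℤ) + 1) = (q:ℤ)^n + 1 := by exact_mod_cast hm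
  have hqle : q ≤ q ^ 2 := Nat.le_self_pow two_ne_zero q
  have hMZ : (M:ℤ) * ((q:ℤ)^2 - (q:ℤ)) = (m:ℤ) - 1 := by
    have h := congrArg (Nat.cast : ℕ → ℤ) hM
    push_cast [Nat.cast_sub hqle, Nat.cast_sub (by omega : 1 ≤ m)] at h
    exact h
  have hMpos : 0 < M := by
    rcases Nat.eq_zero_or_pos M with h | h
    · exfalso; rw [h, zero_mul] at hM; omega
    · exact h
  have hMQ : (0:ℚ) < (M:ℚ) := by exact_mod_cast hMpos
  have decomp : ∀ i : ℤ, ∃ k ℓ β : ℤ, i = -(k * ((q:ℤ)^n + 1)) - ℓ * (m:ℤ) - β ∧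
      0 ≤ β ∧ β < (m:ℤ) ∧ 0 ≤ ℓ ∧ ℓ < (q:ℤ) + 1 := by
    intro i
    refine ⟨(-i) / (m:ℤ) / ((q:ℤ) + 1), ((-i) / (m:ℤ)) % ((q:ℤ) + 1), (-i) % (m:ℤ),
      ?_, ?_, ?_, ?_, ?_⟩
    · have hA := Int.mul_ediv_add_emod (-i) (m:ℤ)
      have hB := Int.mul_ediv_add_emod ((-i) / (m:ℤ)) ((q:ℤ) + 1)
      linear_combination hA + (m:ℤ) * hB - ((-i) / (m:ℤ) / ((q:ℤ) + 1)) * hN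
    · exact Int.emod_nonneg _ (by omega)
    · exact Int.emod_lt_of_pos _ hmpos
    · exact Int.emod_nonneg _ (by omega)
    · exact Int.emod_lt_of_pos _ (by omega)
  intro i₁ i₂
  obtain ⟨k₁, l₁, b₁, hd₁, hb₁0, hb₁m, hl₁0, hl₁q⟩ := decomp i₁
  obtain ⟨k₂, l₂, b₂, hd₂, hb₂0, hb₂m, hl₂0, hl₂q⟩ := decomp i₂
  obtain ⟨k₀, l₀, b₀, hd₀, hb₀0, hb₀m, hl₀0, hl₀q⟩ := decomp (i₁ + i₂)
  have e₁ := htτ i₁ k₁ l₁ b₁ hd₁ hb₁0 hb₁m hl₁0 hl₁q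
  have e₂ := htτ i₂ k₂ l₂ b₂ hd₂ hb₂0 hb₂m hl₂0 hl₂q
  have e₀ := htτ (i₁ + i₂) k₀ l₀ b₀ hd₀ hb₀0 hb₀m hl₀0 hl₀q
  clear htτ decomp
  set Q : ℤ := (q:ℤ) with hQdef
  set c : ℤ := k₀ - k₁ - k₂ with hcdef
  set u : ℤ := c * (Q + 1) + (l₀ - l₁ - l₂) with hudef
  have hu : b₁ + b₂ - b₀ = u * (m:ℤ) := by
    rw [hudef, hcdef]
    linear_combination hd₁ + hd₂ - hd₀ - (k₀ - k₁ - k₂) * hN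
  clear hd₀ hd₁ hd₂
  have hu0 : 0 ≤ u := by
    by_contra h
    push_neg at h
    have h' : u ≤ -1 := by omega
    have h2 := mul_le_mul_of_nonneg_right h' hmpos.le
    linarith only [h2, hu, hb₁0, hb₂0, hb₀m]
  have hu1 : u ≤ 1 := by
    by_contra h
    push_neg at h
    have h' : 2 ≤ u := by omega
    have h2 := mul_le_mul_of_nonneg_right h' hmpos.le
    linarith only [h2, hu, hb₁m, hb₂m, hb₀0]
  have hc0 : 0 ≤ c := by
    by_contra h
    push_neg at h
    have h' : c ≤ -1 := by omega
    have h2 := mul_le_mul_of_nonneg_right h' (by linarith : (0:ℤ) ≤ Q + 1)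
    linarith only [h2, hudef, hu0, hl₀q, hl₁0, hl₂0, hQ2]
  have hc1 : c ≤ 1 := by
    by_contra h
    push_neg at h
    have h' : 2 ≤ c := by omega
    have h2 := mul_le_mul_of_nonneg_right h' (by linarith : (0:ℤ) ≤ Q + 1)
    linarith only [h2, hudef, hu1, hl₀0, hl₁q, hl₂q, hQ2]
  set C₀ : ℤ := ⌈(b₀ : ℚ) / (M : ℚ)⌉ with hC₀
  set C₁ : ℤ := ⌈(b₁ : ℚ) / (M : ℚ)⌉ with hC₁
  set C₂ : ℤ := ⌈(b₂ : ℚ) / (M : ℚ)⌉ with hC₂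
  have hkey : (C₀ - C₁ - C₂) * Q ≤ c * (Q + 1) * (Q - 1) + u * (Q^2 - 2*Q) := by
    have hcases : u = 0 ∨ u = 1 := by omega
    rcases hcases with h | h
    · -- u = 0 : b₀ = b₁ + b₂
      have hb : b₀ = b₁ + b₂ := by rw [h] at hu; linarith only [hu]
      have hCle : C₀ ≤ C₁ + C₂ := by
        rw [hC₀, hC₁, hC₂, hb]
        have hs : ((b₁ + b₂ : ℤ) : ℚ) / (M:ℚ) = (b₁:ℚ)/(M:ℚ) + (b₂:ℚ)/(M:ℚ) := by
          push_cast; ring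
        rw [hs]; exact ceil_add_le' _ _
      rw [h]
      exact aux0 Q c (C₀ - C₁ - C₂) hQ2 hc0 (by omega)
    · -- u = 1 : b₀ = b₁ + b₂ - m
      have hb : b₀ = b₁ + b₂ - (m:ℤ) := by rw [h] at hu; linarith only [hu]
      have hCle : C₀ ≤ C₁ + C₂ - (Q^2 - Q) := by
        have hsplit : (b₀ : ℚ) / (M:ℚ) =
            (b₁:ℚ)/(M:ℚ) + (((b₂ - 1 : ℤ):ℚ)/(M:ℚ) - ((Q^2 - Q : ℤ):ℚ)) := by
          have hbQ : (b₀ : ℚ) = (b₁:ℚ) + (b₂:ℚ) - (m:ℚ) := by exact_mod_cast hb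
          have hMQz : (M:ℚ) * ((q:ℚ)^2 - (q:ℚ)) = (m:ℚ) - 1 := by
            have h := congrArg (Int.cast : ℤ → ℚ) hMZ
            push_cast at h
            exact h
          field_simp
          push_cast
          push_cast at hMQz hbQ
          linear_combination hbQ + hMQz
        rw [hC₀, hsplit]
        calc ⌈(b₁:ℚ)/(M:ℚ) + (((b₂ - 1 : ℤ):ℚ)/(M:ℚ) - ((Q^2 - Q : ℤ):ℚ))⌉
            ≤ ⌈(b₁:ℚ)/(M:ℚ)⌉ + ⌈((b₂ - 1 : ℤ):ℚ)/(M:ℚ) - ((Q^2 - Q : ℤ):ℚ)⌉ :=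
              ceil_add_le' _ _
          _ = C₁ + (⌈((b₂ - 1 : ℤ):ℚ)/(M:ℚ)⌉ - (Q^2 - Q)) := by
              rw [Int.ceil_sub_intCast]
          _ ≤ C₁ + (C₂ - (Q^2 - Q)) := by
              have hle : ((b₂ - 1 : ℤ):ℚ)/(M:ℚ) ≤ (b₂:ℚ)/(M:ℚ) := by
                gcongr
                push_cast; linarith
              have := Int.ceil_mono hle
              omega
          _ = C₁ + C₂ - (Q^2 - Q) := by ring
      rw [h]
      exact aux1 Q c (C₀ - C₁ - C₂) hQ2 hc0 (by omega)
  have hEq : (k₀*(Q^n + 1) + (C₀ + l₀)*((m:ℤ)*Q) + b₀*(Q^2 - Q))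
      - (k₁*(Q^n + 1) + (C₁ + l₁)*((m:ℤ)*Q) + b₁*(Q^2 - Q))
      - (k₂*(Q^n + 1) + (C₂ + l₂)*((m:ℤ)*Q) + b₂*(Q^2 - Q))
      = (m:ℤ) * (c*(Q+1)*(1-Q) + (C₀ - C₁ - C₂)*Q + 2*u*Q - u*Q^2) := by
    have hu' : b₁ + b₂ - b₀ = ((k₀ - k₁ - k₂) * (Q + 1) + (l₀ - l₁ - l₂)) * (m:ℤ) := by
      rw [hudef, hcdef] at hu; exact hu
    rw [hudef, hcdef]
    linear_combination -(k₀ - k₁ - k₂) * hN - (Q^2 - Q) * hu'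
  have hF : c*(Q+1)*(1-Q) + (C₀ - C₁ - C₂)*Q + 2*u*Q - u*Q^2 ≤ 0 := by
    linarith only [hkey]
  have hMF := mul_le_mul_of_nonneg_left hF (le_of_lt hmpos)
  rw [mul_zero] at hMF
  rw [e₀, e₁, e₂]
  linarith only [hEq, hMF]
end

section
/- Let q be a prime power, n ≥ 3 an odd integer, m := (q^n+1)/(q+1), M := (m−1)/(q²−q), and let τ̃ : ℤ → ℤ be defined as follows: for i ∈ ℤ, let (k, ℓ, β) ∈ ℤ³ be the unique triple with i = −k(q^n+1) − ℓm − β, 0 ≤ β < m and 0 ≤ ℓ < q+1, let γ := ⌈β/M⌉, and set τ̃(i) := k(q^n+1) + (γ+ℓ)mq + β(q²−q). Let S_Q ⊆ ℕ be the additive submonoid of ℕ generated by the set {q^n+1−m} ∪ {q^n+1−k : 0 ≤ k ≤ M}. Then for every natural number i, i ∈ S_Q if and only if τ̃(i) ≤ 0. -/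
set_option maxHeartbeats 1000000


/-- Let `q` be a prime power, `n ≥ 3` odd, `m = (q^n+1)/(q+1)`, `M = (m-1)/(q²-q)`,
`τ̃ : ℤ → ℤ` the map sending `i = -k(q^n+1) - ℓm - β` (with `0 ≤ β < m`, `0 ≤ ℓ < q+1`)
to `k(q^n+1) + (⌈β/M⌉ + ℓ)mq + β(q²-q)`, and `S_Q ⊆ ℕ` the additive submonoid
generated by `{q^n+1-m} ∪ {q^n+1-k : 0 ≤ k ≤ M}`. Then for every `i : ℕ`,
`i ∈ S_Q ↔ τ̃ i ≤ 0`. -/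
theorem stmt_12 (q n m M : ℕ) (hq : IsPrimePow q) (hn : 3 ≤ n) (hodd : Odd n)
    (hm : m * (q + 1) = q ^ n + 1) (hM : M * (q ^ 2 - q) = m - 1)
    (tτ : ℤ → ℤ)
    (htτ : ∀ i k ℓ β : ℤ, i = -(k * ((q : ℤ) ^ n + 1)) - ℓ * (m : ℤ) - β →
      0 ≤ β → β < (m : ℤ) → 0 ≤ ℓ → ℓ < (q : ℤ) + 1 →
      tτ i = k * ((q : ℤ) ^ n + 1) + (⌈(β : ℚ) / (M : ℚ)⌉ + ℓ) * ((m : ℤ) * q)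
        + β * ((q : ℤ) ^ 2 - q)) :
    ∀ i : ℕ,
      i ∈ AddSubmonoid.closure
            ({q ^ n + 1 - m} ∪ {x : ℕ | ∃ k ≤ M, x = q ^ n + 1 - k}) ↔
      tτ (i : ℤ) ≤ 0 := by
  have hq2 : 2 ≤ q := hq.two_le
  have hqq' : q ^ 2 = q * q := sq q
  have h2q : 2 * q ≤ q * q := Nat.mul_le_mul_right q hq2
  have hqsq : q ≤ q ^ 2 := by omega
  -- m ≥ 1
  have hm1 : 1 ≤ m := by
    rcases Nat.eq_zero_or_pos m with h | h
    · subst h; simp at hm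
    · exact h
  -- q^3 ≤ q^n
  have hqn3 : q ^ 3 ≤ q ^ n := Nat.pow_le_pow_right (by omega) hn
  have hcube : q ^ 3 = q * q * q := by ring
  have h4 : 2 * (q * q) ≤ q * (q * q) := Nat.mul_le_mul_right (q * q) hq2
  have hassoc : q * (q * q) = q * q * q := by ring
  -- M ≥ 1
  have hM1 : 1 ≤ M := by
    rcases Nat.eq_zero_or_pos M with h | h
    · exfalso
      subst h
      simp at hM
      have hmm : m = 1 := by omega
      subst hmm
      simp at hm
      omega
    · exact h
  have hq2q : 2 ≤ q ^ 2 - q := by omega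
  -- M ≤ m - 1 (so M ≤ m, M < m)
  have hMm1 : M ≤ m - 1 := by
    have : M * 1 ≤ M * (q ^ 2 - q) := Nat.mul_le_mul_left M (by omega)
    omega
  have hmN : m ≤ q ^ n + 1 := by
    have h5 : m * 1 ≤ m * (q + 1) := Nat.mul_le_mul_left m (by omega)
    omega
  have hMN : M ≤ q ^ n + 1 := by omega
  -- integer versions
  have hmZ : (m : ℤ) * ((q : ℤ) + 1) = (q : ℤ) ^ n + 1 := by exact_mod_cast hm
  have hMZ : (M : ℤ) * ((q : ℤ) ^ 2 - (q : ℤ)) = (m : ℤ) - 1 := by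
    have h := hM
    zify [hqsq, hm1] at h
    exact h
  have hq2Z : (2 : ℤ) ≤ (q : ℤ) := by exact_mod_cast hq2
  have hm1Z : (1 : ℤ) ≤ (m : ℤ) := by exact_mod_cast hm1
  have hM1Z : (1 : ℤ) ≤ (M : ℤ) := by exact_mod_cast hM1
  have hqqZ : (0 : ℤ) ≤ (q : ℤ) ^ 2 - q := by nlinarith
  have hNpos : (0 : ℤ) < (q : ℤ) ^ n + 1 := by positivity
  have hMQ : (0 : ℚ) < (M : ℚ) := by exact_mod_cast hM1
  -- ceiling helpers
  have ceil_le : ∀ β z : ℤ, β ≤ z * M → ⌈(β : ℚ) / (M : ℚ)⌉ ≤ z := by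
    intro β z h
    rw [Int.ceil_le, div_le_iff₀ hMQ]
    exact_mod_cast h
  have le_ceil : ∀ β : ℤ, β ≤ ⌈(β : ℚ) / (M : ℚ)⌉ * M := by
    intro β
    have h := Int.le_ceil ((β : ℚ) / (M : ℚ))
    rw [div_le_iff₀ hMQ] at h
    exact_mod_cast h
  -- the key characterization
  have char : ∀ t ℓ β : ℤ, 0 ≤ β → β < (m : ℤ) → 0 ≤ ℓ → ℓ ≤ (q : ℤ) →
      (tτ (t * ((q : ℤ) ^ n + 1) - ℓ * (m : ℤ) - β) ≤ 0 ↔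
        ⌈(β : ℚ) / (M : ℚ)⌉ + ℓ ≤ t) := by
    intro t ℓ β hβ0 hβm hℓ0 hℓq
    set γ := ⌈(β : ℚ) / (M : ℚ)⌉ with hγdef
    have hform := htτ (t * ((q : ℤ) ^ n + 1) - ℓ * (m : ℤ) - β) (-t) ℓ β
      (by ring) hβ0 hβm hℓ0 (by linarith)
    have hγ0 : 0 ≤ γ := Int.ceil_nonneg (by positivity)
    have hβγ : β ≤ γ * M := le_ceil β
    have hγub : γ ≤ (q : ℤ) ^ 2 - q := by
      apply ceil_le
      linarith [hMZ]
    have hβqq : β * ((q : ℤ) ^ 2 - q) ≤ γ * ((m : ℤ) - 1) := by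
      calc β * ((q : ℤ) ^ 2 - q) ≤ (γ * M) * ((q : ℤ) ^ 2 - q) :=
            mul_le_mul_of_nonneg_right hβγ hqqZ
        _ = γ * ((m : ℤ) - 1) := by rw [mul_assoc, hMZ]
    have hℓm0 : (0 : ℤ) ≤ ℓ * m := mul_nonneg hℓ0 (by linarith)
    have hA : (γ + ℓ) * ((m : ℤ) * q) + β * ((q : ℤ) ^ 2 - q) ≤
        (γ + ℓ) * ((q : ℤ) ^ n + 1) := by
      have h1 : (γ + ℓ) * ((q : ℤ) ^ n + 1) = (γ + ℓ) * (m * q) + (γ + ℓ) * m := by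
        rw [← hmZ]; ring
      rw [h1]
      linarith [hβqq, hℓm0, hγ0]
    have hB : (γ + ℓ - 1) * ((q : ℤ) ^ n + 1) <
        (γ + ℓ) * ((m : ℤ) * q) + β * ((q : ℤ) ^ 2 - q) := by
      have hℓm : ℓ * (m : ℤ) ≤ q * m := mul_le_mul_of_nonneg_right hℓq (by linarith)
      rcases eq_or_lt_of_le hγ0 with h0 | h1
      · rw [← hmZ, ← h0]
        have hβqq0 : (0 : ℤ) ≤ β * ((q : ℤ) ^ 2 - q) := mul_nonneg hβ0 hqqZ
        linarith [hℓm, hβqq0, hm1Z]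
      · have hγ1 : 1 ≤ γ := h1
        have h2 : (γ - 1) * (M : ℤ) < β := by
          by_contra hc
          push_neg at hc
          have := ceil_le β (γ - 1) hc
          omega
        have h3 : (γ - 1) * ((m : ℤ) - 1) ≤ (β - 1) * ((q : ℤ) ^ 2 - q) := by
          have h2' : (γ - 1) * (M : ℤ) ≤ β - 1 := by omega
          calc (γ - 1) * ((m : ℤ) - 1) = ((γ - 1) * M) * ((q : ℤ) ^ 2 - q) := by
                rw [mul_assoc, hMZ]
            _ ≤ (β - 1) * ((q : ℤ) ^ 2 - q) := mul_le_mul_of_nonneg_right h2' hqqZ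
        rw [← hmZ]
        linarith [hℓm, h3, hγub]
    rw [hform]
    constructor
    · intro h
      by_contra hc
      push_neg at hc
      have ht : t ≤ γ + ℓ - 1 := by omega
      have h6 := mul_le_mul_of_nonneg_right ht (le_of_lt hNpos)
      linarith [h6, hB, h]
    · intro h
      have h6 := mul_le_mul_of_nonneg_right h (le_of_lt hNpos)
      linarith [hA, h6]
  -- membership of generators
  have hmem_gen : ∀ k : ℕ, k ≤ M →
      (q ^ n + 1 - k) ∈ AddSubmonoid.closure
        ({q ^ n + 1 - m} ∪ {x : ℕ | ∃ k ≤ M, x = q ^ n + 1 - k}) := by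
    intro k hk
    exact AddSubmonoid.subset_closure (Or.inr ⟨k, hk, rfl⟩)
  have hgen0 : (q ^ n + 1 - m) ∈ AddSubmonoid.closure
      ({q ^ n + 1 - m} ∪ {x : ℕ | ∃ k ≤ M, x = q ^ n + 1 - k}) :=
    AddSubmonoid.subset_closure (Or.inl rfl)
  -- d*(q^n+1) - s is in the closure when s ≤ d*M
  have mem_aux : ∀ d s : ℕ, s ≤ d * M →
      (d * (q ^ n + 1) - s) ∈ AddSubmonoid.closure
        ({q ^ n + 1 - m} ∪ {x : ℕ | ∃ k ≤ M, x = q ^ n + 1 - k}) := by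
    intro d
    induction d with
    | zero =>
      intro s hs
      simp only [Nat.zero_mul, Nat.le_zero] at hs
      subst hs
      simp only [Nat.zero_mul, Nat.zero_sub]
      exact AddSubmonoid.zero_mem _
    | succ d ih =>
      intro s hs
      rw [add_mul, one_mul] at hs
      by_cases hsM : s ≤ M
      · have h1 := hmem_gen s hsM
        have h2 := ih 0 (Nat.zero_le _)
        have key : (d + 1) * (q ^ n + 1) - s = (q ^ n + 1 - s) + (d * (q ^ n + 1) - 0) := by
          rw [add_mul, one_mul]
          have hsN : s ≤ q ^ n + 1 := le_trans hsM hMN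
          omega
        rw [key]
        exact AddSubmonoid.add_mem _ h1 h2
      · have h1 := hmem_gen M le_rfl
        have hs' : s - M ≤ d * M := by omega
        have h2 := ih (s - M) hs'
        have hdMN : d * M ≤ d * (q ^ n + 1) := Nat.mul_le_mul_left d hMN
        have key : (d + 1) * (q ^ n + 1) - s =
            (q ^ n + 1 - M) + (d * (q ^ n + 1) - (s - M)) := by
          rw [add_mul, one_mul]
          omega
        rw [key]
        exact AddSubmonoid.add_mem _ h1 h2
  intro i
  constructor
  · -- membership implies τ̃ ≤ 0
    intro hi
    have hrep : ∃ c t s : ℕ, s ≤ t * M ∧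
        (i : ℤ) = c * ((m : ℤ) * q) + t * ((q : ℤ) ^ n + 1) - s := by
      refine AddSubmonoid.closure_induction ?_ ?_ ?_ hi
      · rintro x (hx | ⟨k, hk, rfl⟩)
        · refine ⟨1, 0, 0, Nat.zero_le _, ?_⟩
          rw [Set.mem_singleton_iff] at hx
          subst hx
          rw [Nat.cast_sub hmN]
          push_cast
          linarith [hmZ]
        · refine ⟨0, 1, k, by simpa using hk, ?_⟩
          rw [Nat.cast_sub (le_trans hk hMN)]
          push_cast
          ring
      · exact ⟨0, 0, 0, Nat.zero_le _, by simp⟩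
      · rintro x y hx hy ⟨c1, t1, s1, h1, e1⟩ ⟨c2, t2, s2, h2, e2⟩
        refine ⟨c1 + c2, t1 + t2, s1 + s2, ?_, ?_⟩
        · calc s1 + s2 ≤ t1 * M + t2 * M := Nat.add_le_add h1 h2
            _ = (t1 + t2) * M := by ring
        · push_cast
          linarith [e1, e2]
    obtain ⟨c, t, s, hs, he⟩ := hrep
    set σ := s / m with hσdef
    set β := s % m with hβdef
    set δ := (c + σ) / (q + 1) with hδdef
    set ℓn := (c + σ) % (q + 1) with hℓdef
    have hdm : m * σ + β = s := Nat.div_add_mod s m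
    have hdq : (q + 1) * δ + ℓn = c + σ := Nat.div_add_mod (c + σ) (q + 1)
    have hβm : β < m := Nat.mod_lt _ (by omega)
    have hℓq : ℓn < q + 1 := Nat.mod_lt _ (by omega)
    have hdmZ : (m : ℤ) * σ + β = s := by exact_mod_cast hdm
    have hdqZ : ((q : ℤ) + 1) * δ + ℓn = c + σ := by exact_mod_cast hdq
    have key : (i : ℤ) = ((t : ℤ) + c - δ) * ((q : ℤ) ^ n + 1) - (ℓn : ℤ) * m - (β : ℤ) := by
      rw [he]
      linear_combination hdmZ + (m : ℤ) * hdqZ + ((c : ℤ) - (δ : ℤ)) * hmZ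
    rw [key]
    rw [char ((t : ℤ) + c - δ) ℓn β (Int.natCast_nonneg β) (by exact_mod_cast hβm)
      (Int.natCast_nonneg ℓn) (by exact_mod_cast Nat.lt_succ_iff.mp hℓq)]
    -- now show ⌈β/M⌉ + ℓn ≤ t + c - δ
    have hsZ : (s : ℤ) ≤ t * M := by exact_mod_cast hs
    have hMmZ : (M : ℤ) ≤ m := by
      have : M ≤ m := by omega
      exact_mod_cast this
    have hσ0 : (0 : ℤ) ≤ (σ : ℤ) := Int.natCast_nonneg σ
    have hσm : (σ : ℤ) * M ≤ σ * m := mul_le_mul_of_nonneg_left hMmZ hσ0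
    have hγle : ⌈((β : ℤ) : ℚ) / (M : ℚ)⌉ ≤ (t : ℤ) - σ := by
      apply ceil_le
      linarith [hdmZ, hsZ, hσm]
    have hδq : (0 : ℤ) ≤ (δ : ℤ) * q :=
      mul_nonneg (Int.natCast_nonneg δ) (Int.natCast_nonneg q)
    linarith [hγle, hdqZ, hδq]
  · -- τ̃ ≤ 0 implies membership
    intro hτ
    set k := (-(i : ℤ)) / ((q : ℤ) ^ n + 1) with hkdef
    set r := (-(i : ℤ)) % ((q : ℤ) ^ n + 1) with hrdef
    have hr0 : 0 ≤ r := Int.emod_nonneg _ (ne_of_gt hNpos)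
    have hrN : r < (q : ℤ) ^ n + 1 := Int.emod_lt_of_pos _ hNpos
    have hkr : ((q : ℤ) ^ n + 1) * k + r = -(i : ℤ) := Int.mul_ediv_add_emod _ _
    set ℓz := r / (m : ℤ) with hℓzdef
    set βz := r % (m : ℤ) with hβzdef
    have hmZpos : (0 : ℤ) < (m : ℤ) := by exact_mod_cast hm1
    have hβ0 : 0 ≤ βz := Int.emod_nonneg _ (ne_of_gt hmZpos)
    have hβm : βz < (m : ℤ) := Int.emod_lt_of_pos _ hmZpos
    have hℓ0 : 0 ≤ ℓz := Int.ediv_nonneg hr0 (le_of_lt hmZpos)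
    have hℓm : (m : ℤ) * ℓz + βz = r := Int.mul_ediv_add_emod r m
    have hℓq : ℓz ≤ (q : ℤ) := by
      by_contra hc
      push_neg at hc
      have hq1 : (q : ℤ) + 1 ≤ ℓz := by omega
      have : (m : ℤ) * ((q : ℤ) + 1) ≤ m * ℓz :=
        mul_le_mul_of_nonneg_left hq1 (le_of_lt hmZpos)
      rw [hmZ] at this
      linarith
    have ht : (i : ℤ) = (-k) * ((q : ℤ) ^ n + 1) - ℓz * (m : ℤ) - βz := by
      linear_combination hkr + hℓm
    have hchar := (char (-k) ℓz βz hβ0 hβm hℓ0 hℓq).mp (by rw [← ht]; exact hτ)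
    set γ := ⌈((βz : ℤ) : ℚ) / (M : ℚ)⌉ with hγdef
    have hγ0 : 0 ≤ γ := Int.ceil_nonneg (by positivity)
    have hβγ : βz ≤ γ * M := le_ceil βz
    -- translate to naturals
    have hdk : 0 ≤ -k - ℓz := by linarith
    set L := ℓz.toNat with hLdef
    set B := βz.toNat with hBdef
    set d := (-k - ℓz).toNat with hddef
    have hL : (L : ℤ) = ℓz := Int.toNat_of_nonneg hℓ0
    have hB : (B : ℤ) = βz := Int.toNat_of_nonneg hβ0
    have hd : (d : ℤ) = -k - ℓz := Int.toNat_of_nonneg hdk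
    have hBdZ : (B : ℤ) ≤ (d : ℤ) * M := by
      rw [hB, hd]
      calc βz ≤ γ * M := hβγ
        _ ≤ (-k - ℓz) * M := mul_le_mul_of_nonneg_right (by linarith) (by linarith)
    have hBd : B ≤ d * M := by exact_mod_cast hBdZ
    have hBdN : B ≤ d * (q ^ n + 1) := le_trans hBd (Nat.mul_le_mul_left d hMN)
    have hieq : i = L * (q ^ n + 1 - m) + (d * (q ^ n + 1) - B) := by
      zify [hmN, hBdN]
      rw [ht, hL, hB, hd]
      ring
    rw [hieq]
    refine AddSubmonoid.add_mem _ ?_ (mem_aux d B hBd)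
    have h := nsmul_mem hgen0 L
    rwa [smul_eq_mul] at h
end

section
/- Let q be a prime power, n ≥ 3 an odd integer, m := (q^n+1)/(q+1), M := (m−1)/(q²−q), and let τ̃ : ℤ → ℤ be defined as follows: for i ∈ ℤ, let (k, ℓ, β) ∈ ℤ³ be the unique triple with i = −k(q^n+1) − ℓm − β, 0 ≤ β < m and 0 ≤ ℓ < q+1, let γ := ⌈β/M⌉, and set τ̃(i) := k(q^n+1) + (γ+ℓ)mq + β(q²−q). Let S_P ⊆ ℕ be the additive submonoid of ℕ generated by the set {q^n+1} ∪ {mq + k(q²−q) : 0 ≤ k ≤ M}. Then for every natural number j, j ∈ S_P if and only if there exists an integer i ≤ 0 with τ̃(i) = j. -/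
theorem myceil (b Mn : ℕ) (hM : 0 < Mn) :
    ⌈(b : ℚ) / (Mn : ℚ)⌉ = ((b + Mn - 1) / Mn : ℕ) := by
  set γ := (b + Mn - 1) / Mn with hγ
  have h1 : γ * Mn ≤ b + Mn - 1 := Nat.div_mul_le_self _ _
  have h2' : b + Mn - 1 < (γ + 1) * Mn := (Nat.div_lt_iff_lt_mul hM).mp (Nat.lt_succ_self γ)
  have he : (γ + 1) * Mn = γ * Mn + Mn := by ring
  have hb1 : b ≤ γ * Mn := by omega
  have hb2 : γ * Mn < b + Mn := by omega
  have hMq : (0:ℚ) < (Mn:ℚ) := by positivity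
  rw [Int.ceil_eq_iff]
  constructor
  · rw [lt_div_iff₀ hMq]
    have : ((γ:ℚ)) * Mn < b + Mn := by exact_mod_cast hb2
    push_cast
    nlinarith
  · rw [div_le_iff₀ hMq]
    exact_mod_cast hb1

theorem myreduce (q m Mn : ℕ) (hq2 : 2 ≤ q) (hm : 0 < m) :
    ∀ K c : ℕ, K ≤ c * Mn → ∃ c' K', K' < m ∧ K' ≤ c' * Mn ∧
      c * (m * q) + K * (q ^ 2 - q) = c' * (m * q) + K' * (q ^ 2 - q) := by
  intro K
  induction K using Nat.strong_induction_on with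
  | _ K ih =>
    intro c hK
    by_cases h : K < m
    · exact ⟨c, K, h, hK, rfl⟩
    · push_neg at h
      have hKm : K - m < K := by omega
      have hle : K - m ≤ (c + (q - 1)) * Mn := by
        have : (c + (q - 1)) * Mn = c * Mn + (q - 1) * Mn := by ring
        omega
      obtain ⟨c', K', h1, h2, h3⟩ := ih (K - m) hKm (c + (q - 1)) hle
      refine ⟨c', K', h1, h2, ?_⟩
      rw [← h3]
      have hqq : q ≤ q ^ 2 := by nlinarith
      zify [hqq, h, hq2]
      push_cast [hqq, h, (by omega : 1 ≤ q)]
      ring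

theorem mynorm (q n m Mn : ℕ) (hq2 : 2 ≤ q) (hm : 0 < m) (hMn : 0 < Mn)
    (hmq : m * (q + 1) = q ^ n + 1) :
    ∀ a c K : ℕ, K ≤ c * Mn → ∃ k ℓ β : ℕ, β < m ∧ ℓ < q + 1 ∧
      a * (q ^ n + 1) + c * (m * q) + K * (q ^ 2 - q)
        = k * (q ^ n + 1) + ((β + Mn - 1) / Mn + ℓ) * (m * q) + β * (q ^ 2 - q) := by
  intro a c K hK
  obtain ⟨c', K', hK'm, hK'c, heq⟩ := myreduce q m Mn hq2 hm K c hK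
  set γ := (K' + Mn - 1) / Mn with hγ
  have hγc : γ ≤ c' := by
    have h1 : K' + Mn - 1 ≤ c' * Mn + (Mn - 1) := by omega
    have h2 : (Mn - 1 + c' * Mn) / Mn = (Mn - 1) / Mn + c' := Nat.add_mul_div_right _ _ hMn
    rw [(by ring : c' * Mn + (Mn - 1) = Mn - 1 + c' * Mn)] at h1
    have h3 : (Mn - 1) / Mn = 0 := Nat.div_eq_of_lt (by omega)
    have := Nat.div_le_div_right (c := Mn) h1
    omega
  set ℓ0 := c' - γ with hℓ0
  set s := ℓ0 / (q + 1) with hs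
  set ℓ := ℓ0 % (q + 1) with hℓ
  refine ⟨a + q * s, ℓ, K', hK'm, Nat.mod_lt _ (by omega), ?_⟩
  rw [add_assoc, heq, ← add_assoc]
  have hdm : (q + 1) * s + ℓ = ℓ0 := by rw [hs, hℓ]; exact Nat.div_add_mod ℓ0 (q + 1)
  have hc' : c' = γ + ℓ + (q + 1) * s := by omega
  have hqq : q ≤ q ^ 2 := by nlinarith
  have key : ((q:ℤ) + 1) * (m * q) = q * (q ^ n + 1) := by
    have : ((m:ℤ)) * (q + 1) = (q:ℤ) ^ n + 1 := by exact_mod_cast hmq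
    linear_combination (q:ℤ) * this
  rw [← hγ]
  zify [hqq]
  rw [hc']
  push_cast
  linear_combination (s:ℤ) * key

/-- Let `q` be a prime power, `n ≥ 3` odd, `m = (q^n+1)/(q+1)`, `M = (m-1)/(q²-q)`,
`τ̃ : ℤ → ℤ` the map sending `i = -k(q^n+1) - ℓm - β` (with `0 ≤ β < m`, `0 ≤ ℓ < q+1`)
to `k(q^n+1) + (⌈β/M⌉ + ℓ)mq + β(q²-q)`, and `S_P ⊆ ℕ` the additive submonoid
generated by `{q^n+1} ∪ {mq + k(q²-q) : 0 ≤ k ≤ M}`. Then for every `j : ℕ`,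
`j ∈ S_P` if and only if there is an integer `i ≤ 0` with `τ̃ i = j`. -/
theorem stmt_13 (q n m M : ℕ) (hq : IsPrimePow q) (hn : 3 ≤ n) (hodd : Odd n)
    (hm : m * (q + 1) = q ^ n + 1) (hM : M * (q ^ 2 - q) = m - 1)
    (tτ : ℤ → ℤ)
    (htτ : ∀ i k ℓ β : ℤ, i = -(k * ((q : ℤ) ^ n + 1)) - ℓ * (m : ℤ) - β →
      0 ≤ β → β < (m : ℤ) → 0 ≤ ℓ → ℓ < (q : ℤ) + 1 →
      tτ i = k * ((q : ℤ) ^ n + 1) + (⌈(β : ℚ) / (M : ℚ)⌉ + ℓ) * ((m : ℤ) * q)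
        + β * ((q : ℤ) ^ 2 - q)) :
    ∀ j : ℕ,
      j ∈ AddSubmonoid.closure
            ({q ^ n + 1} ∪ {x : ℕ | ∃ k ≤ M, x = m * q + k * (q ^ 2 - q)}) ↔
      ∃ i : ℤ, i ≤ 0 ∧ tτ i = (j : ℤ) := by
  have hq2 : 2 ≤ q := hq.two_le
  have hq3n : q ^ 3 ≤ q ^ n := Nat.pow_le_pow_right (by omega) hn
  have hq3 : 2 ^ 3 ≤ q ^ 3 := Nat.pow_le_pow_left hq2 3
  have hqq : q ≤ q ^ 2 := by nlinarith
  have hq3q : q + 1 < q ^ 3 + 1 := by nlinarith [pow_succ q 2, sq q]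
  have hm2 : 2 ≤ m := by
    by_contra h
    push_neg at h
    interval_cases m <;> omega
  have hMn : 0 < M := by
    rcases Nat.eq_zero_or_pos M with h | h
    · rw [h, zero_mul] at hM; omega
    · exact h
  intro j
  constructor
  · intro hj
    have hrep : ∃ a c K : ℕ, K ≤ c * M ∧
        j = a * (q ^ n + 1) + c * (m * q) + K * (q ^ 2 - q) := by
      induction hj using AddSubmonoid.closure_induction with
      | mem x hx =>
        rcases hx with hx | ⟨k, hk, hx⟩
        · exact ⟨1, 0, 0, by simp, by simp at hx ⊢; omega⟩
        · exact ⟨0, 1, k, by simpa using hk, by simp [hx]⟩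
      | zero => exact ⟨0, 0, 0, Nat.zero_le _, by simp⟩
      | add x y hx hy ihx ihy =>
        obtain ⟨a1, c1, K1, h1, e1⟩ := ihx
        obtain ⟨a2, c2, K2, h2, e2⟩ := ihy
        refine ⟨a1 + a2, c1 + c2, K1 + K2, ?_, by rw [e1, e2]; ring⟩
        have : (c1 + c2) * M = c1 * M + c2 * M := by ring
        omega
    obtain ⟨a, c, K, hK, hj'⟩ := hrep
    obtain ⟨k, ℓ, β, hβm, hℓq, hid⟩ :=
      mynorm q n m M hq2 (by omega) hMn hm a c K hK
    refine ⟨-((k : ℤ) * ((q:ℤ) ^ n + 1) + (ℓ : ℤ) * m + β), ?_, ?_⟩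
    · have h1 : (0:ℤ) ≤ (k : ℤ) * ((q:ℤ) ^ n + 1) + (ℓ : ℤ) * m + β := by positivity
      omega
    · rw [htτ _ k ℓ β (by ring) (by positivity) (by exact_mod_cast hβm)
        (by positivity) (by exact_mod_cast hℓq)]
      have hc : ⌈((β : ℕ) : ℚ) / ((M : ℕ) : ℚ)⌉ = ((β + M - 1) / M : ℕ) := myceil β M hMn
      push_cast
      push_cast at hc
      rw [hc]
      have : (j : ℤ) = k * ((q:ℤ) ^ n + 1)
          + (((β + M - 1) / M : ℕ) + (ℓ:ℤ)) * ((m:ℤ) * q) + (β:ℤ) * ((q:ℤ) ^ 2 - q) := by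
        rw [hj']
        zify [hqq] at hid ⊢
        linarith [hid]
      push_cast at this
      linarith [this]
  · rintro ⟨i, hi0, hij⟩
    have hN : 0 < q ^ n + 1 := by positivity
    have hm0 : 0 < m := by omega
    obtain ⟨t, ht⟩ : ∃ t : ℕ, (t : ℤ) = -i := ⟨(-i).toNat, Int.toNat_of_nonneg (by omega)⟩
    obtain ⟨k, r, hkr, hrN⟩ : ∃ k r, t = k * (q ^ n + 1) + r ∧ r < q ^ n + 1 :=
      ⟨t / (q ^ n + 1), t % (q ^ n + 1), (Nat.div_add_mod' t _).symm, Nat.mod_lt _ hN⟩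
    obtain ⟨ℓ, β, hlb, hβm⟩ : ∃ ℓ β, r = ℓ * m + β ∧ β < m :=
      ⟨r / m, r % m, (Nat.div_add_mod' r m).symm, Nat.mod_lt _ hm0⟩
    have hℓq : ℓ < q + 1 := by
      have h1 : ℓ * m < (q + 1) * m := by
        calc ℓ * m ≤ r := by omega
          _ < q ^ n + 1 := hrN
          _ = (q + 1) * m := by rw [← hm]; ring
      exact lt_of_mul_lt_mul_right h1 (Nat.zero_le m)
    have hti : (t : ℤ) = (k : ℤ) * ((q:ℤ) ^ n + 1) + ((ℓ:ℤ) * m + β) := by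
      exact_mod_cast congrArg (Nat.cast : ℕ → ℤ) (by omega : t = k * (q ^ n + 1) + (ℓ * m + β))
    have hieq : i = -((k:ℤ) * ((q:ℤ) ^ n + 1)) - (ℓ:ℤ) * m - (β:ℤ) := by omega
    have hτ := htτ i k ℓ β hieq (by positivity) (by exact_mod_cast hβm)
      (by positivity) (by exact_mod_cast hℓq)
    rw [hij] at hτ
    have hc : ⌈((β : ℕ) : ℚ) / ((M : ℕ) : ℚ)⌉ = ((β + M - 1) / M : ℕ) := myceil β M hMn
    push_cast at hτ
    push_cast at hc
    rw [hc] at hτ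
    have hjnat : j = k * (q ^ n + 1) + ((β + M - 1) / M + ℓ) * (m * q) + β * (q ^ 2 - q) := by
      zify [hqq]
      push_cast
      linarith [hτ]
    set S := AddSubmonoid.closure
        ({q ^ n + 1} ∪ {x : ℕ | ∃ k ≤ M, x = m * q + k * (q ^ 2 - q)}) with hS
    have hmul : ∀ (c x : ℕ), x ∈ S → c * x ∈ S := fun c x hx => by
      simpa [nsmul_eq_mul] using AddSubmonoid.nsmul_mem S hx c
    have hg0 : q ^ n + 1 ∈ S := AddSubmonoid.subset_closure (Or.inl rfl)
    have hgk : ∀ u ≤ M, m * q + u * (q ^ 2 - q) ∈ S := fun u hu =>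
      AddSubmonoid.subset_closure (Or.inr ⟨u, hu, rfl⟩)
    have hgmq : m * q ∈ S := by
      have := hgk 0 (Nat.zero_le _)
      simpa using this
    obtain ⟨d, r', hβd, hr'M⟩ : ∃ d r', M * d + r' = β ∧ r' < M :=
      ⟨β / M, β % M, Nat.div_add_mod β M, Nat.mod_lt _ hMn⟩
    have hMd1 : M * (d + 1) = M * d + M := by ring
    by_cases hz : r' = 0
    · have hγd : (β + M - 1) / M = d := by
        have h1 : β + M - 1 = M * d + (M - 1) := by omega
        rw [h1, Nat.mul_add_div hMn, Nat.div_eq_of_lt (by omega)]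
        omega
      have hjj : j = k * (q ^ n + 1) + ℓ * (m * q) + d * (m * q + M * (q ^ 2 - q)) := by
        rw [hjnat, hγd, (by omega : β = M * d)]; ring
      rw [hjj]
      exact add_mem (add_mem (hmul _ _ hg0) (hmul _ _ hgmq))
        (hmul _ _ (hgk M (le_refl _)))
    · have hγd : (β + M - 1) / M = d + 1 := by
        have h1 : β + M - 1 = M * (d + 1) + (r' - 1) := by omega
        rw [h1, Nat.mul_add_div hMn, Nat.div_eq_of_lt (by omega)]
      have hjj : j = k * (q ^ n + 1) + ℓ * (m * q) + d * (m * q + M * (q ^ 2 - q))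
          + (m * q + r' * (q ^ 2 - q)) := by
        rw [hjnat, hγd, (by omega : β = M * d + r')]; ring
      rw [hjj]
      exact add_mem (add_mem (add_mem (hmul _ _ hg0) (hmul _ _ hgmq))
        (hmul _ _ (hgk M (le_refl _)))) (hgk r' (by omega))
end

section
/- Let q be a prime power, n ≥ 3 an odd integer, m := (q^n+1)/(q+1) and M := (m−1)/(q²−q). Let S_P ⊆ ℕ be the additive submonoid of ℕ generated by the set {q^n+1} ∪ {mq + k(q²−q) : 0 ≤ k ≤ M}. Then the complement ℕ \ S_P is finite and its cardinality equals (1/2)(q−1)(q^{n+1}+q^n−q²). -/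
open Finset

namespace BM14

/-- value of a pair -/
def w (m q d : ℕ) (c : ℕ × ℕ) : ℕ := c.1 * (m * q) + c.2 * d

/-- canonical (Apéry) index set -/
def inK (q M d : ℕ) (c : ℕ × ℕ) : Prop :=
  1 ≤ c.1 ∧ c.2 ≤ c.1 * M ∧ c.2 ≤ M * d ∧ (c.1 ≤ q ∨ (c.1 - (q + 1)) * M + 1 ≤ c.2)

def inK0 (q M d : ℕ) (c : ℕ × ℕ) : Prop := inK q M d c ∨ c = (0, 0)

section Basic

variable {q M d m a : ℕ}

lemma qd_le (hq : 2 ≤ q) (hd : d + q = q * q) : q ≤ d := by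
  have h2 : 2 * q ≤ q * q := Nat.mul_le_mul_right q hq
  omega

lemma m_ge (hq : 2 ≤ q) (hM : 1 ≤ M) (hd : d + q = q * q) (hm : m = M * d + 1) :
    q + 1 ≤ m := by
  have h1 : q ≤ d := qd_le hq hd
  have h2 : d ≤ M * d := Nat.le_mul_of_pos_left d (by omega)
  omega

/-- key identity R1 : m*d + m*q = q*(m*q) -/
lemma idR1 (hd : d + q = q * q) : m * d + m * q = q * (m * q) := by
  calc m * d + m * q = m * (d + q) := by ring
    _ = m * (q * q) := by rw [hd]
    _ = q * (m * q) := by ring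

/-- key identity R2 : (q+1)*(m*q) = q*a -/
lemma idR2 (ha : a = m * (q + 1)) : (q + 1) * (m * q) = q * a := by
  rw [ha]; ring

/-- Reduction: every admissible pair reduces to a canonical pair plus multiples of a. -/
lemma reduce (hq : 2 ≤ q) (hM : 1 ≤ M) (hd : d + q = q * q) (hm : m = M * d + 1)
    (ha : a = m * (q + 1)) :
    ∀ N t j, t + j ≤ N → j ≤ t * M →
      ∃ α c, inK0 q M d c ∧ t * (m * q) + j * d = α * a + w m q d c := by
  intro N
  induction N with
  | zero =>
    intro t j htj _
    have ht : t = 0 := by omega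
    have hj : j = 0 := by omega
    exact ⟨0, (0, 0), Or.inr rfl, by simp [w, ht, hj]⟩
  | succ N ih =>
    intro t j htj hj
    have hm1 : 1 ≤ m := by omega
    by_cases hjm : m ≤ j
    · -- strip an m from j, add q-1 to t
      obtain ⟨t₀, rfl⟩ : ∃ t₀, t = t₀ + 1 := by
        rcases t with _ | t₀
        · simp at hj; omega
        · exact ⟨t₀, rfl⟩
      obtain ⟨j₀, rfl⟩ : ∃ j₀, j = j₀ + m := ⟨j - m, by omega⟩
      have key : (t₀ + 1) * (m * q) + (j₀ + m) * d = (t₀ + q) * (m * q) + j₀ * d := by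
        have h1 : (j₀ + m) * d = j₀ * d + m * d := by ring
        have h2 : (t₀ + q) * (m * q) = t₀ * (m * q) + q * (m * q) := by ring
        have h3 : (t₀ + 1) * (m * q) = t₀ * (m * q) + m * q := by ring
        have h4 := idR1 (q := q) (d := d) (m := m) hd
        omega
      have hmq : q + 1 ≤ m := m_ge hq hM hd hm
      have hsum : (t₀ + q) + j₀ ≤ N := by omega
      have hj' : j₀ ≤ (t₀ + q) * M := by
        have h1 : (t₀ + 1) * M = t₀ * M + M := by ring
        have h2 : (t₀ + q) * M = t₀ * M + q * M := by ring
        have h3 : M ≤ q * M := Nat.le_mul_of_pos_left M (by omega)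
        omega
      obtain ⟨α, c, hc, hval⟩ := ih (t₀ + q) j₀ hsum hj'
      exact ⟨α, c, hc, by omega⟩
    · by_cases ht0 : t = 0
      · subst ht0
        have hj0 : j = 0 := by simpa using hj
        exact ⟨0, (0, 0), Or.inr rfl, by simp [w, hj0]⟩
      · by_cases hcond : t ≤ q ∨ (t - (q + 1)) * M + 1 ≤ j
        · have hjMd : j ≤ M * d := by omega
          have ht1 : 1 ≤ t := by omega
          exact ⟨0, (t, j), Or.inl ⟨ht1, hj, hjMd, hcond⟩, by simp [w]⟩
        · push_neg at hcond
          obtain ⟨hc1, hc2⟩ := hcond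
          obtain ⟨t₀, rfl⟩ : ∃ t₀, t = t₀ + (q + 1) := ⟨t - (q + 1), by omega⟩
          have hsub : t₀ + (q + 1) - (q + 1) = t₀ := by omega
          rw [hsub] at hc2
          have key : (t₀ + (q + 1)) * (m * q) + j * d = q * a + (t₀ * (m * q) + j * d) := by
            have h1 : (t₀ + (q + 1)) * (m * q) = t₀ * (m * q) + (q + 1) * (m * q) := by ring
            have h2 := idR2 (q := q) (m := m) (a := a) ha
            omega
          have hsum : t₀ + j ≤ N := by omega
          obtain ⟨α, c, hc, hval⟩ := ih t₀ j hsum (by omega)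
          exact ⟨q + α, c, hc, by rw [key, hval]; ring⟩


/-- every AP-monoid element is in the closure -/
lemma C_mem (hM : 1 ≤ M) (S : Set ℕ)
    (hS : S = ({a} : Set ℕ) ∪ {x : ℕ | ∃ k ≤ M, x = m * q + k * d}) :
    ∀ t j, j ≤ t * M → t * (m * q) + j * d ∈ AddSubmonoid.closure S := by
  intro t
  induction t with
  | zero =>
    intro j hj
    have : j = 0 := by simpa using hj
    simp only [this, Nat.zero_mul, Nat.mul_zero, Nat.add_zero]
    exact AddSubmonoid.zero_mem _
  | succ t ih =>
    intro j hj
    by_cases hjM : M ≤ j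
    · have hgen : m * q + M * d ∈ S := by
        rw [hS]; right; exact ⟨M, le_refl M, rfl⟩
      have hrec := ih (j - M) (by
        have h1 : (t + 1) * M = t * M + M := by ring
        omega)
      have heq : (t + 1) * (m * q) + j * d = (m * q + M * d) + (t * (m * q) + (j - M) * d) := by
        have h1 : (t + 1) * (m * q) = t * (m * q) + m * q := by ring
        have h2 : j * d = (j - M) * d + M * d := by
          have : j = (j - M) + M := by omega
          calc j * d = ((j - M) + M) * d := by rw [← this]
            _ = (j - M) * d + M * d := by ring
        omega
      rw [heq]
      exact AddSubmonoid.add_mem _ (AddSubmonoid.subset_closure hgen) hrec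
    · have hgen : m * q + j * d ∈ S := by
        rw [hS]; right; exact ⟨j, by omega, rfl⟩
      have hrec := ih 0 (by omega)
      have heq : (t + 1) * (m * q) + j * d = (m * q + j * d) + (t * (m * q) + 0 * d) := by ring
      rw [heq]
      exact AddSubmonoid.add_mem _ (AddSubmonoid.subset_closure hgen) hrec

/-- membership description of the semigroup -/
lemma mem_closure_iff (hM : 1 ≤ M) (S : Set ℕ)
    (hS : S = ({a} : Set ℕ) ∪ {x : ℕ | ∃ k ≤ M, x = m * q + k * d}) (x : ℕ) :
    x ∈ AddSubmonoid.closure S ↔ ∃ α t j, j ≤ t * M ∧ x = α * a + (t * (m * q) + j * d) := by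
  constructor
  · intro hx
    induction hx using AddSubmonoid.closure_induction with
    | mem y hy =>
      rw [hS] at hy
      rcases hy with hy | ⟨k, hk, rfl⟩
      · exact ⟨1, 0, 0, by omega, by simp at hy; omega⟩
      · exact ⟨0, 1, k, by omega, by ring⟩
    | zero => exact ⟨0, 0, 0, by omega, by simp⟩
    | add y z hy hz hy' hz' =>
      obtain ⟨α, t, j, hj, rfl⟩ := hy'
      obtain ⟨α', t', j', hj', rfl⟩ := hz'
      refine ⟨α + α', t + t', j + j', ?_, by ring⟩
      have h1 : (t + t') * M = t * M + t' * M := by ring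
      omega
  · rintro ⟨α, t, j, hj, rfl⟩
    have h1 : α * a ∈ AddSubmonoid.closure S := by
      have : a ∈ AddSubmonoid.closure S := AddSubmonoid.subset_closure (by rw [hS]; left; rfl)
      simpa using (AddSubmonoid.closure S).nsmul_mem this α
    exact AddSubmonoid.add_mem _ h1 (C_mem hM S hS t j hj)


/-- helper for injectivity : no two K₀-pairs with equal j differ by a positive multiple of q+1 -/
lemma winj_aux (hc : inK0 q M d c) (hc' : inK0 q M d c') (hj : c.2 = c'.2)
    (hlt : c.1 + (q + 1) ≤ c'.1) : False := by
  obtain ⟨t, j⟩ := c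
  obtain ⟨t', j'⟩ := c'
  simp only at hj hlt ⊢
  have hj2 : j ≤ t * M := by
    rcases hc with h | h
    · exact h.2.1
    · simp only [Prod.mk.injEq] at h
      simp [h.1, h.2]
  have h4 : (t' - (q + 1)) * M + 1 ≤ j' := by
    rcases hc' with h | h
    · rcases h.2.2.2 with h5 | h5
      · omega
      · exact h5
    · simp only [Prod.mk.injEq] at h
      omega
  have h5 : t * M ≤ (t' - (q + 1)) * M := Nat.mul_le_mul_right M (by omega)
  omega

/-- injectivity of residues mod a on K₀ -/
lemma winj (hq : 2 ≤ q) (hM : 1 ≤ M) (hd : d + q = q * q) (hm : m = M * d + 1)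
    (ha : a = m * (q + 1)) (c c' : ℕ × ℕ) (hc : inK0 q M d c) (hc' : inK0 q M d c')
    (h : w m q d c % a = w m q d c' % a) : c = c' := by
  have hm1 : 1 ≤ m := by omega
  obtain ⟨K, hK⟩ : (a : ℤ) ∣ (w m q d c' : ℤ) - (w m q d c : ℤ) :=
    (Nat.ModEq.dvd (h : Nat.ModEq a (w m q d c) (w m q d c')))
  obtain ⟨t, j⟩ := c
  obtain ⟨t', j'⟩ := c'
  simp only [w] at hK
  push_cast at hK
  -- j' = j
  have hdvd : (m : ℤ) ∣ ((j' : ℤ) - j) * d := by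
    refine ⟨K * (q + 1) + t * q - t' * q, ?_⟩
    have haz : (a : ℤ) = (m : ℤ) * ((q : ℤ) + 1) := by rw [ha]; push_cast; ring
    rw [haz] at hK
    linear_combination hK
  have hcop : IsCoprime (m : ℤ) (d : ℤ) := ⟨1, -(M : ℤ), by push_cast [hm]; ring⟩
  have hdvdj : (m : ℤ) ∣ ((j' : ℤ) - j) := hcop.dvd_of_dvd_mul_right hdvd
  have hjb : j ≤ M * d := by
    rcases hc with h' | h'
    · exact h'.2.2.1
    · simp only [Prod.mk.injEq] at h'; omega
  have hjb' : j' ≤ M * d := by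
    rcases hc' with h' | h'
    · exact h'.2.2.1
    · simp only [Prod.mk.injEq] at h'; omega
  have hjj : (j' : ℤ) = j := by
    have habs : |(j' : ℤ) - j| < m := by
      rw [abs_lt]
      constructor <;> [skip; skip] <;>
      · push_cast
        omega
    have := Int.eq_zero_of_abs_lt_dvd hdvdj habs
    omega
  -- t' - t is a multiple of q+1
  have hjnat : j' = j := by exact_mod_cast hjj
  subst hjnat
  have hK2 : ((t' : ℤ) - t) * (m * q) = K * (m * (q + 1)) := by
    have haz : (a : ℤ) = (m : ℤ) * ((q : ℤ) + 1) := by rw [ha]; push_cast; ring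
    rw [haz] at hK
    linear_combination hK
  have hmne : (m : ℤ) ≠ 0 := by exact_mod_cast (by omega : m ≠ 0)
  have hK3 : ((t' : ℤ) - t) * q = K * (q + 1) := by
    have h1 : (m : ℤ) * (((t' : ℤ) - t) * q) = (m : ℤ) * (K * (q + 1)) := by
      linear_combination hK2
    exact mul_left_cancel₀ hmne h1
  have hqdvd : (q : ℤ) ∣ K * (q + 1) := ⟨(t' : ℤ) - t, by linarith [hK3]⟩
  have hcop2 : IsCoprime ((q : ℤ) + 1) (q : ℤ) := ⟨1, -1, by ring⟩
  obtain ⟨K', rfl⟩ : (q : ℤ) ∣ K := (hcop2.symm).dvd_of_dvd_mul_right (by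
    obtain ⟨e, he⟩ := hqdvd
    exact ⟨e, by linarith [he]⟩)
  have hqne : (q : ℤ) ≠ 0 := by exact_mod_cast (by omega : q ≠ 0)
  have hK4 : (t' : ℤ) - t = K' * (q + 1) := by
    have h1 : (q : ℤ) * ((t' : ℤ) - t) = (q : ℤ) * (K' * (q + 1)) := by
      linear_combination hK3
    exact mul_left_cancel₀ hqne h1
  rcases lt_trichotomy K' 0 with hK' | hK' | hK'
  · exfalso
    refine winj_aux (c := (t', j')) (c' := (t, j')) hc' hc rfl ?_
    have : (t' : ℤ) + (q + 1) ≤ t := by nlinarith [hK4]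
    exact_mod_cast this
  · subst hK'
    have : (t' : ℤ) = t := by linarith [hK4]
    have : t' = t := by exact_mod_cast this
    simp [this]
  · exfalso
    refine winj_aux (c := (t, j')) (c' := (t', j')) hc hc' rfl ?_
    have : (t : ℤ) + (q + 1) ≤ t' := by nlinarith [hK4]
    exact_mod_cast this


end Basic

def AF (q M d : ℕ) : Finset (ℕ × ℕ) :=
  (Ico 1 (q + d + 1)).biUnion fun t => (range (min (t * M) (M * d) + 1)).image fun j => (t, j)

def BF (q M d : ℕ) : Finset (ℕ × ℕ) :=
  (Ico (q + 1) (q + d + 1)).biUnion fun t => (range ((t - (q + 1)) * M + 1)).image fun j => (t, j)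

def KF (q M d : ℕ) : Finset (ℕ × ℕ) := AF q M d \ BF q M d

def K0F (q M d : ℕ) : Finset (ℕ × ℕ) := insert (0, 0) (KF q M d)

section FinsetLemmas

variable {q M d m a : ℕ}

lemma pdisj (s : Finset ℕ) (n : ℕ → ℕ) :
    ∀ x ∈ s, ∀ y ∈ s, x ≠ y →
      Disjoint ((range (n x)).image fun j => (x, j)) ((range (n y)).image fun j => (y, j)) := by
  intro t _ t' _ htt'
  simp only [Finset.disjoint_left]
  intro c hc hc'
  simp only [Finset.mem_image, Finset.mem_range] at hc hc'
  obtain ⟨j, _, rfl⟩ := hc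
  obtain ⟨j', _, h⟩ := hc'
  exact htt' (by simpa using (Prod.mk.injEq _ _ _ _ ▸ h).1.symm)

lemma mem_AF (c : ℕ × ℕ) :
    c ∈ AF q M d ↔ 1 ≤ c.1 ∧ c.1 ≤ q + d ∧ c.2 ≤ c.1 * M ∧ c.2 ≤ M * d := by
  obtain ⟨t, j⟩ := c
  simp only [AF, Finset.mem_biUnion, Finset.mem_Ico, Finset.mem_image, Finset.mem_range,
    Nat.lt_succ_iff, le_min_iff, Prod.mk.injEq]
  constructor
  · rintro ⟨t', ⟨h1, h2⟩, j', ⟨hj1, hj2⟩, rfl, rfl⟩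
    exact ⟨h1, by omega, hj1, hj2⟩
  · rintro ⟨h1, h2, h3, h4⟩
    exact ⟨t, ⟨h1, by omega⟩, j, ⟨h3, h4⟩, rfl, rfl⟩

lemma mem_BF (c : ℕ × ℕ) :
    c ∈ BF q M d ↔ q + 1 ≤ c.1 ∧ c.1 ≤ q + d ∧ c.2 ≤ (c.1 - (q + 1)) * M := by
  obtain ⟨t, j⟩ := c
  simp only [BF, Finset.mem_biUnion, Finset.mem_Ico, Finset.mem_image, Finset.mem_range,
    Nat.lt_succ_iff, Prod.mk.injEq]
  constructor
  · rintro ⟨t', ⟨h1, h2⟩, j', hj, rfl, rfl⟩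
    exact ⟨h1, by omega, hj⟩
  · rintro ⟨h1, h2, h3⟩
    exact ⟨t, ⟨h1, by omega⟩, j, h3, rfl, rfl⟩

lemma BF_subset_AF : BF q M d ⊆ AF q M d := by
  intro c hc
  rw [mem_BF] at hc
  rw [mem_AF]
  obtain ⟨h1, h2, h3⟩ := hc
  have h4 : (c.1 - (q + 1)) * M ≤ c.1 * M := Nat.mul_le_mul_right M (by omega)
  have h5 : (c.1 - (q + 1)) * M ≤ M * d := by
    calc (c.1 - (q + 1)) * M ≤ d * M := Nat.mul_le_mul_right M (by omega)
      _ = M * d := Nat.mul_comm d M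
  exact ⟨by omega, h2, by omega, by omega⟩

lemma mem_KF (hq : 2 ≤ q) (hd : d + q = q * q) (c : ℕ × ℕ) :
    c ∈ KF q M d ↔ inK q M d c := by
  have hqd : q ≤ d := qd_le hq hd
  rw [KF, Finset.mem_sdiff, mem_AF, mem_BF, inK]
  constructor
  · rintro ⟨⟨h1, h2, h3, h4⟩, h5⟩
    refine ⟨h1, h3, h4, ?_⟩
    by_cases htq : c.1 ≤ q
    · exact Or.inl htq
    · right
      by_contra hcon
      exact h5 ⟨by omega, h2, by omega⟩
  · rintro ⟨h1, h2, h3, h4⟩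
    have hub : c.1 ≤ q + d := by
      by_contra hcon
      rcases h4 with h4 | h4
      · omega
      · have : d * M ≤ (c.1 - (q + 1)) * M := Nat.mul_le_mul_right M (by omega)
        have hMd : M * d = d * M := Nat.mul_comm M d
        omega
    refine ⟨⟨h1, hub, h2, h3⟩, ?_⟩
    rintro ⟨h5, h6, h7⟩
    rcases h4 with h4 | h4
    · omega
    · omega

lemma zero_notmem_KF (hq : 2 ≤ q) (hd : d + q = q * q) : (0, 0) ∉ KF q M d := by
  rw [mem_KF hq hd]
  rintro ⟨h, -⟩
  exact absurd h (by omega)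

lemma card_AF_eq (hq : 2 ≤ q) (hd : d + q = q * q) :
    (AF q M d).card = (BF q M d).card + ((q + 1) * (M * d) + q) := by
  have hqd : q ≤ d := qd_le hq hd
  have hAF : (AF q M d).card = ∑ t ∈ Ico 1 (q + d + 1), (min (t * M) (M * d) + 1) := by
    rw [AF, Finset.card_biUnion (pdisj _ (fun t => min (t * M) (M * d) + 1))]
    refine Finset.sum_congr rfl fun t _ => ?_
    rw [Finset.card_image_of_injective _ (fun j j' h => by simpa using h), Finset.card_range]
  have hBF : (BF q M d).card = ∑ t ∈ Ico (q + 1) (q + d + 1), ((t - (q + 1)) * M + 1) := by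
    rw [BF, Finset.card_biUnion (pdisj _ (fun t => (t - (q + 1)) * M + 1))]
    refine Finset.sum_congr rfl fun t _ => ?_
    rw [Finset.card_image_of_injective _ (fun j j' h => by simpa using h), Finset.card_range]
  rw [hAF, hBF]
  rw [← Finset.sum_Ico_consecutive _ (by omega : 1 ≤ d + 1) (by omega : d + 1 ≤ q + d + 1)]
  have e1 : ∑ t ∈ Ico 1 (d + 1), (min (t * M) (M * d) + 1) = ∑ t ∈ Ico 1 (d + 1), (t * M + 1) := by
    refine Finset.sum_congr rfl fun t ht => ?_
    rw [Finset.mem_Ico] at ht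
    have : t * M ≤ M * d := by
      calc t * M ≤ d * M := Nat.mul_le_mul_right M (by omega)
        _ = M * d := Nat.mul_comm d M
    rw [Nat.min_eq_left this]
  have e2 : ∑ t ∈ Ico (d + 1) (q + d + 1), (min (t * M) (M * d) + 1)
      = ∑ t ∈ Ico (d + 1) (q + d + 1), (M * d + 1) := by
    refine Finset.sum_congr rfl fun t ht => ?_
    rw [Finset.mem_Ico] at ht
    have : M * d ≤ t * M := by
      calc M * d = d * M := Nat.mul_comm M d
        _ ≤ t * M := Nat.mul_le_mul_right M (by omega)
    rw [Nat.min_eq_right this]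
  rw [e1, e2, Finset.sum_const, Nat.card_Ico]
  have e3 : ∑ t ∈ Ico 1 (d + 1), (t * M + 1) = ∑ i ∈ range d, ((1 + i) * M + 1) := by
    rw [Finset.sum_Ico_eq_sum_range]
    simp
  have e4 : ∑ t ∈ Ico (q + 1) (q + d + 1), ((t - (q + 1)) * M + 1)
      = ∑ i ∈ range d, (i * M + 1) := by
    rw [Finset.sum_Ico_eq_sum_range]
    have hrange : q + d + 1 - (q + 1) = d := by omega
    rw [hrange]
    refine Finset.sum_congr rfl fun i _ => ?_
    congr 2
    omega
  rw [e3, e4]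
  have e5 : ∑ i ∈ range d, ((1 + i) * M + 1) = ∑ i ∈ range d, (i * M + 1) + d * M := by
    have : ∀ i, (1 + i) * M + 1 = (i * M + 1) + M := fun i => by ring
    simp only [this]
    rw [Finset.sum_add_distrib, Finset.sum_const, Finset.card_range, smul_eq_mul]
  rw [e5]
  have : (q + d + 1 - (d + 1)) = q := by omega
  rw [this]
  ring

lemma card_K0F (hq : 2 ≤ q) (hM : 1 ≤ M) (hd : d + q = q * q) (hm : m = M * d + 1)
    (ha : a = m * (q + 1)) : (K0F q M d).card = a := by
  have h1 : (KF q M d).card = (q + 1) * (M * d) + q := by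
    rw [KF, Finset.card_sdiff_of_subset BF_subset_AF]
    have := card_AF_eq (q := q) (M := M) (d := d) hq hd
    omega
  rw [K0F, Finset.card_insert_of_notMem (zero_notmem_KF hq hd), h1, ha, hm]
  ring


lemma sum_range_cast (n : ℕ) : ∑ i ∈ range n, (i : ℚ) = n * (n - 1) / 2 := by
  induction n with
  | zero => simp
  | succ n ih =>
    rw [Finset.sum_range_succ, ih]
    push_cast
    ring

lemma lin_sum (n : ℕ) (T D : ℚ) :
    ∑ j ∈ range n, (T + (j : ℚ) * D) = n * T + (n * ((n : ℚ) - 1) / 2) * D := by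
  rw [Finset.sum_add_distrib, Finset.sum_const, Finset.card_range, ← Finset.sum_mul,
    sum_range_cast, nsmul_eq_mul]

lemma image_sum (m q d t n : ℕ) :
    ∑ c ∈ (range n).image (fun j => (t, j)), (w m q d c : ℚ)
      = (n : ℚ) * ((t : ℚ) * ((m : ℚ) * q)) + ((n : ℚ) * ((n : ℚ) - 1) / 2) * (d : ℚ) := by
  rw [Finset.sum_image (by intro x _ y _ h; simpa using h)]
  rw [Finset.sum_congr rfl
    (fun j (_ : j ∈ range n) => by
      show (w m q d (t, j) : ℚ) = (t : ℚ) * ((m : ℚ) * q) + (j : ℚ) * d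
      simp only [w]
      push_cast
      ring)]
  exact lin_sum n _ _

end FinsetLemmas

section SumLemmas

variable {q M d m a : ℕ}

lemma sum_w_KF (hq : 2 ≤ q) (hM : 1 ≤ M) (hd : d + q = q * q) (hm : m = M * d + 1)
    (ha : a = m * (q + 1)) :
    ∑ c ∈ KF q M d, (w m q d c : ℚ)
      = ((a : ℚ) * ((a : ℚ) - 1)
          + ((q : ℚ) - 1) * (((a : ℚ) - 1) * ((q : ℚ) + 1) - (q : ℚ) * q) * a) / 2 := by
  have hqd : q ≤ d := qd_le hq hd
  -- sdiff decomposition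
  have hsd : ∑ c ∈ KF q M d, (w m q d c : ℚ)
      = ∑ c ∈ AF q M d, (w m q d c : ℚ) - ∑ c ∈ BF q M d, (w m q d c : ℚ) := by
    have := Finset.sum_sdiff (f := fun c => (w m q d c : ℚ)) (BF_subset_AF (q := q) (M := M) (d := d))
    rw [KF]
    linarith [this]
  -- AF sum
  have hAF : ∑ c ∈ AF q M d, (w m q d c : ℚ)
      = ∑ t ∈ Ico 1 (q + d + 1),
          (((min (t * M) (M * d) + 1 : ℕ) : ℚ) * ((t : ℚ) * ((m : ℚ) * q))
            + (((min (t * M) (M * d) + 1 : ℕ) : ℚ) * (((min (t * M) (M * d) + 1 : ℕ) : ℚ) - 1) / 2) * d) := by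
    rw [AF, Finset.sum_biUnion]
    · exact Finset.sum_congr rfl fun t _ => image_sum m q d t _
    · intro x hx y hy h
      exact pdisj _ (fun t => min (t * M) (M * d) + 1) x hx y hy h
  have hBF : ∑ c ∈ BF q M d, (w m q d c : ℚ)
      = ∑ t ∈ Ico (q + 1) (q + d + 1),
          ((((t - (q + 1)) * M + 1 : ℕ) : ℚ) * ((t : ℚ) * ((m : ℚ) * q))
            + ((((t - (q + 1)) * M + 1 : ℕ) : ℚ) * ((((t - (q + 1)) * M + 1 : ℕ) : ℚ) - 1) / 2) * d) := by
    rw [BF, Finset.sum_biUnion]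
    · exact Finset.sum_congr rfl fun t _ => image_sum m q d t _
    · intro x hx y hy h
      exact pdisj _ (fun t => (t - (q + 1)) * M + 1) x hx y hy h
  -- split AF range
  rw [hsd, hAF, hBF]
  rw [← Finset.sum_Ico_consecutive _ (by omega : 1 ≤ d + 1) (by omega : d + 1 ≤ q + d + 1)]
  -- block 1 : t ∈ [1, d]
  have e1 : ∑ t ∈ Ico 1 (d + 1),
      (((min (t * M) (M * d) + 1 : ℕ) : ℚ) * ((t : ℚ) * ((m : ℚ) * q))
        + (((min (t * M) (M * d) + 1 : ℕ) : ℚ) * (((min (t * M) (M * d) + 1 : ℕ) : ℚ) - 1) / 2) * d)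
      = ∑ i ∈ range d,
        ((((1 + i) * M + 1 : ℕ) : ℚ) * (((1 + i : ℕ) : ℚ) * ((m : ℚ) * q))
          + ((((1 + i) * M + 1 : ℕ) : ℚ) * ((((1 + i) * M + 1 : ℕ) : ℚ) - 1) / 2) * d) := by
    rw [Finset.sum_Ico_eq_sum_range]
    simp only [Nat.add_sub_cancel]
    refine Finset.sum_congr rfl fun i hi => ?_
    rw [Finset.mem_range] at hi
    have hmin : min ((1 + i) * M) (M * d) = (1 + i) * M := by
      refine Nat.min_eq_left ?_
      calc (1 + i) * M ≤ d * M := Nat.mul_le_mul_right M (by omega)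
        _ = M * d := Nat.mul_comm d M
    rw [hmin]
  -- block 2 : t ∈ [d+1, q+d]
  have e2 : ∑ t ∈ Ico (d + 1) (q + d + 1),
      (((min (t * M) (M * d) + 1 : ℕ) : ℚ) * ((t : ℚ) * ((m : ℚ) * q))
        + (((min (t * M) (M * d) + 1 : ℕ) : ℚ) * (((min (t * M) (M * d) + 1 : ℕ) : ℚ) - 1) / 2) * d)
      = ∑ i ∈ range q,
        (((M * d + 1 : ℕ) : ℚ) * (((d + 1 + i : ℕ) : ℚ) * ((m : ℚ) * q))
          + (((M * d + 1 : ℕ) : ℚ) * (((M * d + 1 : ℕ) : ℚ) - 1) / 2) * d) := by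
    rw [Finset.sum_Ico_eq_sum_range]
    have hr : q + d + 1 - (d + 1) = q := by omega
    rw [hr]
    refine Finset.sum_congr rfl fun i hi => ?_
    have hmin : min ((d + 1 + i) * M) (M * d) = M * d := by
      refine Nat.min_eq_right ?_
      calc M * d = d * M := Nat.mul_comm M d
        _ ≤ (d + 1 + i) * M := Nat.mul_le_mul_right M (by omega)
    rw [hmin]
  -- BF block
  have e3 : ∑ t ∈ Ico (q + 1) (q + d + 1),
      ((((t - (q + 1)) * M + 1 : ℕ) : ℚ) * ((t : ℚ) * ((m : ℚ) * q))
        + ((((t - (q + 1)) * M + 1 : ℕ) : ℚ) * ((((t - (q + 1)) * M + 1 : ℕ) : ℚ) - 1) / 2) * d)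
      = ∑ i ∈ range d,
        (((i * M + 1 : ℕ) : ℚ) * (((q + 1 + i : ℕ) : ℚ) * ((m : ℚ) * q))
          + (((i * M + 1 : ℕ) : ℚ) * (((i * M + 1 : ℕ) : ℚ) - 1) / 2) * d) := by
    rw [Finset.sum_Ico_eq_sum_range]
    have hr : q + d + 1 - (q + 1) = d := by omega
    rw [hr]
    refine Finset.sum_congr rfl fun i hi => ?_
    have hsub : q + 1 + i - (q + 1) = i := by omega
    rw [hsub]
  rw [e1, e2, e3]
  clear hsd hAF hBF e1 e2 e3
  -- combine block1 - BF pointwise : linear + telescoping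
  have key : ∀ i : ℕ,
      ((((1 + i) * M + 1 : ℕ) : ℚ) * (((1 + i : ℕ) : ℚ) * ((m : ℚ) * q))
          + ((((1 + i) * M + 1 : ℕ) : ℚ) * ((((1 + i) * M + 1 : ℕ) : ℚ) - 1) / 2) * d)
        - (((i * M + 1 : ℕ) : ℚ) * (((q + 1 + i : ℕ) : ℚ) * ((m : ℚ) * q))
          + (((i * M + 1 : ℕ) : ℚ) * (((i * M + 1 : ℕ) : ℚ) - 1) / 2) * d)
      = (((m : ℚ) * q * ((M : ℚ) - q)) + (i : ℚ) * ((m : ℚ) * q * ((M : ℚ) - (M : ℚ) * q)))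
        + ((fun u : ℕ => ((u : ℚ) * M * ((u : ℚ) * M + 1) / 2) * d) (i + 1)
            - (fun u : ℕ => ((u : ℚ) * M * ((u : ℚ) * M + 1) / 2) * d) i) := by
    intro i
    simp only []
    push_cast
    ring
  have hS13 : (∑ i ∈ range d,
        ((((1 + i) * M + 1 : ℕ) : ℚ) * (((1 + i : ℕ) : ℚ) * ((m : ℚ) * q))
          + ((((1 + i) * M + 1 : ℕ) : ℚ) * ((((1 + i) * M + 1 : ℕ) : ℚ) - 1) / 2) * d))
      - (∑ i ∈ range d,
        (((i * M + 1 : ℕ) : ℚ) * (((q + 1 + i : ℕ) : ℚ) * ((m : ℚ) * q))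
          + (((i * M + 1 : ℕ) : ℚ) * (((i * M + 1 : ℕ) : ℚ) - 1) / 2) * d))
      = ((d : ℚ) * ((m : ℚ) * q * ((M : ℚ) - q))
          + ((d : ℚ) * ((d : ℚ) - 1) / 2) * ((m : ℚ) * q * ((M : ℚ) - (M : ℚ) * q)))
        + (((d : ℚ) * M * ((d : ℚ) * M + 1) / 2) * d - 0) := by
    rw [← Finset.sum_sub_distrib]
    rw [Finset.sum_congr rfl (fun i _ => key i)]
    rw [Finset.sum_add_distrib, lin_sum,
      Finset.sum_range_sub (fun u : ℕ => ((u : ℚ) * M * ((u : ℚ) * M + 1) / 2) * d) d]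
    push_cast
    ring
  have hS2 : ∑ i ∈ range q,
        (((M * d + 1 : ℕ) : ℚ) * (((d + 1 + i : ℕ) : ℚ) * ((m : ℚ) * q))
          + (((M * d + 1 : ℕ) : ℚ) * (((M * d + 1 : ℕ) : ℚ) - 1) / 2) * d)
      = (q : ℚ) * (((M : ℚ) * d + 1) * (((d : ℚ) + 1) * ((m : ℚ) * q))
            + (((M : ℚ) * d + 1) * ((M : ℚ) * d) / 2) * d)
        + ((q : ℚ) * ((q : ℚ) - 1) / 2) * (((M : ℚ) * d + 1) * ((m : ℚ) * q)) := by
    rw [Finset.sum_congr rfl (fun i (_ : i ∈ range q) => by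
      show _ = (((M : ℚ) * d + 1) * (((d : ℚ) + 1) * ((m : ℚ) * q))
            + (((M : ℚ) * d + 1) * ((M : ℚ) * d) / 2) * d)
          + (i : ℚ) * (((M : ℚ) * d + 1) * ((m : ℚ) * q))
      push_cast
      ring)]
    rw [lin_sum]
  rw [show (∀ A B C : ℚ, A + B - C = (A - C) + B) from fun A B C => by ring]
  rw [hS13, hS2]
  have haQ : (a : ℚ) = ((m : ℚ)) * ((q : ℚ) + 1) := by rw [ha]; push_cast; ring
  have hmQ : (m : ℚ) = (M : ℚ) * d + 1 := by rw [hm]; push_cast; ring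
  have hdQ : (d : ℚ) = (q : ℚ) * q - q := by
    have : ((d + q : ℕ) : ℚ) = ((q * q : ℕ) : ℚ) := by rw [hd]
    push_cast at this
    linarith
  rw [haQ, hmQ, hdQ]
  ring

end SumLemmas

def GFc (m q d a : ℕ) (c : ℕ × ℕ) : Finset ℕ :=
  (range (w m q d c / a)).image fun i => w m q d c % a + i * a

def GF (q M d m a : ℕ) : Finset ℕ := (KF q M d).biUnion (GFc m q d a)

section GapLemmas

variable {q M d m a : ℕ}

lemma mem_K0F_iff (hq : 2 ≤ q) (hd : d + q = q * q) (c : ℕ × ℕ) :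
    c ∈ K0F q M d ↔ inK0 q M d c := by
  rw [K0F, Finset.mem_insert, mem_KF hq hd, inK0, or_comm]

lemma res_image (hq : 2 ≤ q) (hM : 1 ≤ M) (hd : d + q = q * q) (hm : m = M * d + 1)
    (ha : a = m * (q + 1)) :
    (K0F q M d).image (fun c => w m q d c % a) = range a := by
  have ha1 : 1 ≤ a := by rw [ha]; exact Nat.mul_pos (by omega) (by omega)
  have hinj : ∀ x ∈ K0F q M d, ∀ y ∈ K0F q M d,
      w m q d x % a = w m q d y % a → x = y := by
    intro x hx y hy hxy
    exact winj hq hM hd hm ha x y ((mem_K0F_iff hq hd x).mp hx) ((mem_K0F_iff hq hd y).mp hy) hxy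
  refine Finset.eq_of_subset_of_card_le ?_ ?_
  · intro r hr
    simp only [Finset.mem_image] at hr
    obtain ⟨c, _, rfl⟩ := hr
    exact Finset.mem_range.mpr (Nat.mod_lt _ (by omega))
  · rw [Finset.card_image_of_injOn (fun x hx y hy h => hinj x hx y hy h),
      card_K0F hq hM hd hm ha, Finset.card_range]

lemma residue_sum (hq : 2 ≤ q) (hM : 1 ≤ M) (hd : d + q = q * q) (hm : m = M * d + 1)
    (ha : a = m * (q + 1)) :
    2 * (∑ c ∈ KF q M d, (w m q d c % a)) = a * (a - 1) := by
  have hinj : ∀ x ∈ K0F q M d, ∀ y ∈ K0F q M d,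
      w m q d x % a = w m q d y % a → x = y := by
    intro x hx y hy hxy
    exact winj hq hM hd hm ha x y ((mem_K0F_iff hq hd x).mp hx) ((mem_K0F_iff hq hd y).mp hy) hxy
  have h1 : ∑ i ∈ range a, i = ∑ c ∈ K0F q M d, (w m q d c % a) := by
    rw [← res_image hq hM hd hm ha, Finset.sum_image hinj]
  have h2 : ∑ c ∈ K0F q M d, (w m q d c % a)
      = ∑ c ∈ KF q M d, (w m q d c % a) := by
    rw [K0F, Finset.sum_insert (zero_notmem_KF hq hd)]
    simp [w]
  have h3 := Finset.sum_range_id_mul_two a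
  omega

lemma mem_GFc (ha1 : 1 ≤ a) (c : ℕ × ℕ) (x : ℕ) :
    x ∈ GFc m q d a c ↔ x % a = w m q d c % a ∧ x < w m q d c := by
  have hdm := Nat.div_add_mod (w m q d c) a
  have hcm : a * (w m q d c / a) = (w m q d c / a) * a := Nat.mul_comm _ _
  simp only [GFc, Finset.mem_image, Finset.mem_range]
  constructor
  · rintro ⟨i, hi, rfl⟩
    have hmod : (w m q d c % a + i * a) % a = w m q d c % a := by
      rw [Nat.add_mul_mod_self_right, Nat.mod_mod_of_dvd _ (dvd_refl a)]
    refine ⟨hmod, ?_⟩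
    have h2 : (i + 1) * a ≤ (w m q d c / a) * a := Nat.mul_le_mul_right a (by omega)
    have h3 : (i + 1) * a = i * a + a := by ring
    omega
  · rintro ⟨hmod, hlt⟩
    have hdmx := Nat.div_add_mod x a
    have hcmx : a * (x / a) = (x / a) * a := Nat.mul_comm _ _
    have hdiv : x / a < w m q d c / a := by
      have h4 : a * (x / a) < a * (w m q d c / a) := by omega
      exact Nat.lt_of_mul_lt_mul_left h4
    exact ⟨x / a, hdiv, by omega⟩

lemma card_GFc (ha1 : 1 ≤ a) (c : ℕ × ℕ) : (GFc m q d a c).card = w m q d c / a := by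
  rw [GFc, Finset.card_image_of_injOn, Finset.card_range]
  intro i _ j _ h
  simp only at h
  have := Nat.eq_of_mul_eq_mul_right (show 0 < a by omega) (show i * a = j * a by omega)
  exact this

lemma GF_card (hq : 2 ≤ q) (hM : 1 ≤ M) (hd : d + q = q * q) (hm : m = M * d + 1)
    (ha : a = m * (q + 1)) :
    ((GF q M d m a).card : ℚ)
      = (1 / 2) * ((q : ℚ) - 1) * (((a : ℚ) - 1) * ((q : ℚ) + 1) - (q : ℚ) * q) := by
  have ha1 : 1 ≤ a := by rw [ha]; exact Nat.mul_pos (by omega) (by omega)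
  have hdisj : ∀ x ∈ KF q M d, ∀ y ∈ KF q M d, x ≠ y →
      Disjoint (GFc m q d a x) (GFc m q d a y) := by
    intro x hx y hy hxy
    rw [Finset.disjoint_left]
    intro z hzx hzy
    rw [mem_GFc ha1] at hzx hzy
    exact hxy (winj hq hM hd hm ha x y (Or.inl ((mem_KF hq hd x).mp hx))
      (Or.inl ((mem_KF hq hd y).mp hy)) (by omega))
  have hcard : (GF q M d m a).card = ∑ c ∈ KF q M d, (w m q d c / a) := by
    rw [GF, Finset.card_biUnion hdisj]
    exact Finset.sum_congr rfl fun c _ => card_GFc ha1 c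
  have hkey : (a : ℚ) * ((GF q M d m a).card : ℚ)
      = ∑ c ∈ KF q M d, (w m q d c : ℚ) - ∑ c ∈ KF q M d, ((w m q d c % a : ℕ) : ℚ) := by
    rw [hcard, ← Finset.sum_sub_distrib]
    push_cast
    rw [Finset.mul_sum]
    refine Finset.sum_congr rfl fun c _ => ?_
    have hdm := Nat.div_add_mod (w m q d c) a
    have : ((a * (w m q d c / a) + w m q d c % a : ℕ) : ℚ) = ((w m q d c : ℕ) : ℚ) := by
      rw [hdm]
    push_cast at this
    linarith
  have hres : (∑ c ∈ KF q M d, ((w m q d c % a : ℕ) : ℚ)) = (a : ℚ) * ((a : ℚ) - 1) / 2 := by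
    have h2 := residue_sum hq hM hd hm ha
    have : ((2 * (∑ c ∈ KF q M d, (w m q d c % a)) : ℕ) : ℚ) = ((a * (a - 1) : ℕ) : ℚ) := by
      rw [h2]
    push_cast [Nat.cast_sub (by omega : 1 ≤ a)] at this
    linarith
  have hsum := sum_w_KF hq hM hd hm ha
  have hane : (a : ℚ) ≠ 0 := by
    have : (0 : ℚ) < (a : ℚ) := by exact_mod_cast (by omega : 0 < a)
    linarith
  have h5 : (a : ℚ) * ((GF q M d m a).card : ℚ)
      = (a : ℚ) * ((1 / 2) * ((q : ℚ) - 1) * (((a : ℚ) - 1) * ((q : ℚ) + 1) - (q : ℚ) * q)) := by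
    rw [hkey, hsum, hres]
    ring
  exact mul_left_cancel₀ hane h5

lemma compl_eq (hq : 2 ≤ q) (hM : 1 ≤ M) (hd : d + q = q * q) (hm : m = M * d + 1)
    (ha : a = m * (q + 1)) (S : Set ℕ)
    (hS : S = ({a} : Set ℕ) ∪ {x : ℕ | ∃ k ≤ M, x = m * q + k * d}) :
    ((AddSubmonoid.closure S : AddSubmonoid ℕ) : Set ℕ)ᶜ = ↑(GF q M d m a) := by
  have ha1 : 1 ≤ a := by rw [ha]; exact Nat.mul_pos (by omega) (by omega)
  ext x
  simp only [Set.mem_compl_iff, SetLike.mem_coe, Finset.coe_sort_coe, Finset.mem_coe]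
  constructor
  · intro hx
    have hxr : x % a ∈ range a := Finset.mem_range.mpr (Nat.mod_lt _ (by omega))
    rw [← res_image hq hM hd hm ha] at hxr
    obtain ⟨c, hcK0, hres⟩ := Finset.mem_image.mp hxr
    have hinK0 : inK0 q M d c := (mem_K0F_iff hq hd c).mp hcK0
    have hjt : c.2 ≤ c.1 * M := by
      rcases hinK0 with h | h
      · exact h.2.1
      · rw [h]; simp
    by_cases hle : w m q d c ≤ x
    · exfalso
      have hmodeq : w m q d c ≡ x [MOD a] := by
        unfold Nat.ModEq
        omega
      obtain ⟨k, hk⟩ := (Nat.modEq_iff_dvd' hle).mp hmodeq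
      refine hx ((mem_closure_iff hM S hS x).mpr ⟨k, c.1, c.2, hjt, ?_⟩)
      have : x = w m q d c + a * k := by omega
      rw [this, w]
      ring
    · push_neg at hle
      have hcne : c ≠ (0, 0) := by
        intro h
        rw [h] at hle
        simp [w] at hle
      have hcKF : c ∈ KF q M d := by
        rcases Finset.mem_insert.mp hcK0 with h | h
        · exact absurd h hcne
        · exact h
      exact Finset.mem_biUnion.mpr ⟨c, hcKF, (mem_GFc ha1 c x).mpr ⟨hres.symm ▸ rfl, hle⟩⟩
  · intro hxGF hxS
    obtain ⟨c, hcKF, hxc⟩ := Finset.mem_biUnion.mp hxGF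
    rw [mem_GFc ha1] at hxc
    obtain ⟨hmod, hlt⟩ := hxc
    obtain ⟨α, t, j, hj, rfl⟩ := (mem_closure_iff hM S hS _).mp hxS
    obtain ⟨α', c₀, hc₀, heq⟩ := reduce hq hM hd hm ha (t + j) t j le_rfl hj
    have hxw : α * a + (t * (m * q) + j * d) = w m q d c₀ + (α + α') * a := by
      rw [heq]; ring
    have hmod0 : (α * a + (t * (m * q) + j * d)) % a = w m q d c₀ % a := by
      rw [hxw, Nat.add_mul_mod_self_right]
    have hceq : c₀ = c := winj hq hM hd hm ha c₀ c hc₀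
      (Or.inl ((mem_KF hq hd c).mp hcKF)) (by omega)
    rw [hceq] at heq
    omega

end GapLemmas

end BM14


/-- Let `q` be a prime power, `n ≥ 3` odd, `m = (q^n+1)/(q+1)`, `M = (m-1)/(q²-q)`, and
`S_P ⊆ ℕ` the additive submonoid generated by `{q^n+1} ∪ {mq + k(q²-q) : 0 ≤ k ≤ M}`.
Then `ℕ \ S_P` is finite of cardinality `(1/2)(q-1)(q^{n+1}+q^n-q²)`. -/
theorem stmt_14 (q n m M : ℕ) (hq : IsPrimePow q) (hn : 3 ≤ n) (hodd : Odd n)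
    (hm : m * (q + 1) = q ^ n + 1) (hM : M * (q ^ 2 - q) = m - 1) :
    letI S_P : AddSubmonoid ℕ := AddSubmonoid.closure
      ({q ^ n + 1} ∪ {x : ℕ | ∃ k ≤ M, x = m * q + k * (q ^ 2 - q)})
    ((S_P : Set ℕ)ᶜ).Finite ∧
      ((((S_P : Set ℕ)ᶜ).ncard : ℚ)
        = (1 / 2) * ((q : ℚ) - 1) * ((q : ℚ) ^ (n + 1) + (q : ℚ) ^ n - (q : ℚ) ^ 2)) := by
  have hq2 : 2 ≤ q := hq.two_le
  have hsq : q ^ 2 = q * q := sq q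
  have hqle : q ≤ q * q := Nat.le_mul_of_pos_left q (by omega)
  have hd : (q ^ 2 - q) + q = q * q := by omega
  have hm0 : 1 ≤ m := by
    rcases Nat.eq_zero_or_pos m with h | h
    · rw [h] at hm; simp at hm
    · exact h
  have hmn : m = M * (q ^ 2 - q) + 1 := by omega
  have hq3n : q ^ 3 ≤ q ^ n := Nat.pow_le_pow_right (by omega) hn
  have hq3 : q ^ 3 = q * (q * q) := by ring
  have h4qq : 4 ≤ q * q := by calc 4 = 2 * 2 := rfl
                                  _ ≤ q * q := Nat.mul_le_mul hq2 hq2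
  have h4q : q * 4 ≤ q * (q * q) := Nat.mul_le_mul_left q h4qq
  have hM1 : 1 ≤ M := by
    by_contra hM0
    have hMz : M = 0 := by omega
    rw [hMz] at hmn
    simp at hmn
    rw [hmn] at hm
    have hqn : q ^ n = q := by omega
    omega
  have ha : q ^ n + 1 = m * (q + 1) := hm.symm
  have hcompl := BM14.compl_eq hq2 hM1 hd hmn ha
    ({q ^ n + 1} ∪ {x : ℕ | ∃ k ≤ M, x = m * q + k * (q ^ 2 - q)}) rfl
  constructor
  · rw [hcompl]
    exact (BM14.GF q M (q ^ 2 - q) m (q ^ n + 1)).finite_toSet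
  · rw [hcompl, Set.ncard_coe_finset]
    rw [BM14.GF_card hq2 hM1 hd hmn ha]
    have hcast : ((q ^ n + 1 : ℕ) : ℚ) = (q : ℚ) ^ n + 1 := by push_cast; ring
    rw [hcast]
    ring
end

section
/- Let q be a prime power, n ≥ 3 an odd integer, m := (q^n+1)/(q+1) and M := (m−1)/(q²−q). Let S_Q ⊆ ℕ be the additive submonoid of ℕ generated by the set {q^n+1−m} ∪ {q^n+1−k : 0 ≤ k ≤ M}. Then the complement ℕ \ S_Q is finite and its cardinality equals (1/2)(q−1)(q^{n+1}+q^n−q²). -/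
namespace Stmt15

def tf (q u : ℕ) : ℕ := (u + q) / (q + 1)

def gs (q m M D u : ℕ) : ℕ :=
  if q * tf q u ≤ u then M * (D - (u - q * tf q u)) else m

lemma tf_le (q u : ℕ) : (q + 1) * tf q u ≤ u + q := by
  rw [tf, mul_comm]; exact Nat.div_mul_le_self _ _

lemma le_tf (q u : ℕ) : u ≤ (q + 1) * tf q u := by
  have h1 := Nat.div_add_mod (u + q) (q + 1)
  have h2 : (u + q) % (q + 1) < q + 1 := Nat.mod_lt _ (by omega)
  show u ≤ (q+1) * ((u + q) / (q+1))
  omega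

lemma tf_mono (q : ℕ) {u u' : ℕ} (h : u ≤ u') : tf q u ≤ tf q u' :=
  Nat.div_le_div_right (by omega)

lemma nonrep_lt (q u : ℕ) (hq : 2 ≤ q) (h : ¬ q * tf q u ≤ u) : u < q * q := by
  by_contra h2
  push_neg at h2
  apply h
  have htl := tf_le q u
  have htg := le_tf q u
  set d := tf q u with hd
  have hdq : q ≤ d := by
    by_contra h3
    push_neg at h3
    have h4 : d ≤ q - 1 := by omega
    have h5 : (q+1) * d ≤ (q+1) * (q-1) := Nat.mul_le_mul_left _ h4
    obtain ⟨c, rfl⟩ : ∃ c, q = c + 2 := ⟨q - 2, by omega⟩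
    have h6 : (c+2+1) * (c+2-1) + 1 = (c+2) * (c+2) := by
      have : c + 2 - 1 = c + 1 := by omega
      rw [this]; ring
    omega
  have he : (q+1) * d = q * d + d := by ring
  omega

lemma big_F (q D u : ℕ) (hq : 2 ≤ q) (hD : D + q = q * q) (h : q * q * (q+1) < u) :
    q * tf q u + D ≤ u := by
  have htl := tf_le q u
  have htg := le_tf q u
  set d := tf q u with hd
  have hdq : q * q + 1 ≤ d := by
    by_contra h3
    push_neg at h3
    have h4 : d ≤ q * q := by omega
    have h5 : (q+1) * d ≤ (q+1) * (q*q) := Nat.mul_le_mul_left _ h4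
    have h6 : (q+1) * (q*q) = q*q*(q+1) := by ring
    omega
  have he : (q+1) * d = q * d + d := by ring
  have hq2 : q ≤ q * q := Nat.le_mul_of_pos_left q (by omega)
  omega

lemma gs_le (q m M D u : ℕ) (hm : m = M * D + 1) : gs q m M D u ≤ m := by
  unfold gs
  split_ifs
  · have h1 : M * (D - (u - q * tf q u)) ≤ M * D := Nat.mul_le_mul_left _ (Nat.sub_le _ _)
    omega
  · exact le_rfl

lemma compl_eq (q m M D : ℕ) (hq : 2 ≤ q) (hD : D + q = q * q) (hD2 : 2 ≤ D)
    (hm : m = M * D + 1) (hM : 1 ≤ M) :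
    {x : ℕ | ∃ t j r : ℕ, j ≤ t ∧ r ≤ j * M ∧ x + r = (t * q + j) * m}ᶜ
      = ↑((Finset.range (q * q * (q+1))).biUnion fun v =>
          Finset.Ico (v * m + 1) (v * m + 1 + gs q m M D (v + 1))) := by
  have hMD2 : 2 ≤ M * D := by
    calc 2 = 1 * 2 := by ring
    _ ≤ M * D := Nat.mul_le_mul hM hD2
  have hMm' : M ≤ m := by
    have : M * 1 ≤ M * D := Nat.mul_le_mul_left _ (by omega)
    omega
  have hm2 : 3 ≤ m := by omega
  ext x
  simp only [Set.mem_compl_iff, Set.mem_setOf_eq, Finset.coe_biUnion, Set.mem_iUnion,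
    Finset.mem_coe, Finset.mem_range, Finset.mem_Ico]
  constructor
  · -- x not in A → x in some gap block
    intro hxA
    have hx0 : x ≠ 0 := by
      intro h
      exact hxA ⟨0, 0, 0, le_rfl, Nat.zero_le _, by simp [h]⟩
    have hdm := Nat.div_add_mod (x - 1) m
    have hmod : (x - 1) % m < m := Nat.mod_lt _ (by omega)
    set v := (x - 1) / m with hv
    have hv1 : v * m + 1 ≤ x := by
      have : m * v = v * m := by ring
      omega
    have hv2 : x ≤ v * m + m := by
      have : m * v = v * m := by ring
      omega
    set u := v + 1 with hu
    have hum : u * m = v * m + m := by rw [hu]; ring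
    have htl := tf_le q u
    have htg := le_tf q u
    set d := tf q u with hd
    by_cases hrep : q * d ≤ u
    · -- representable block
      have hFdef : q * d + (u - q * d) = u := by omega
      set F := u - q * d with hF
      have hFd : F ≤ d := by
        have he : (q+1) * d = q * d + d := by ring
        omega
      -- helper: if u*m ≤ x + M*F then x ∈ A, contradiction
      have hAmem : u * m ≤ x + M * F → False := by
        intro hle
        apply hxA
        refine ⟨d, F, u * m - x, hFd, ?_, ?_⟩
        · have : F * M = M * F := by ring
          omega
        · have h1 : x + (u * m - x) = u * m := by omega
          rw [h1]
          have h2 : d * q + F = u := by rw [mul_comm d q]; exact hFdef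
          rw [h2]
      have hFD : F < D := by
        by_contra hge
        push_neg at hge
        have h1 : M * D ≤ M * F := Nat.mul_le_mul_left _ hge
        exact hAmem (by omega)
      have hgseq : gs q m M D u = M * (D - F) := by
        unfold gs
        rw [if_pos hrep]
      have hsplit2 : M * (D - F) + M * F = M * D := by
        rw [← Nat.mul_add]
        congr 1
        omega
      refine ⟨v, ?_, hv1, ?_⟩
      · -- v < q*q*(q+1)
        by_contra hc
        push_neg at hc
        have hbig := big_F q D u hq hD (by omega)
        rw [← hd] at hbig
        omega
      · -- x < v*m + 1 + gs
        rw [hgseq]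
        by_contra hc
        push_neg at hc
        exact hAmem (by omega)
    · -- non-representable block
      have hult : u < q * q := nonrep_lt q u hq hrep
      have hgseq : gs q m M D u = m := by
        unfold gs
        rw [if_neg hrep]
      refine ⟨v, ?_, hv1, ?_⟩
      · have h1 : q * q * 1 ≤ q * q * (q+1) := Nat.mul_le_mul_left _ (by omega)
        omega
      · rw [hgseq]; omega
  · -- x in gap block → x not in A
    rintro ⟨v, hvV, hxlo, hxhi⟩ ⟨t, j, r, hjt, hr, hsum⟩
    set u := v + 1 with hu
    have hum : u * m = v * m + m := by rw [hu]; ring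
    have hgsle : gs q m M D u ≤ m := gs_le q m M D u hm
    have hx_um : x ≤ u * m := by omega
    set u' := t * q + j with hu'
    have hu'_ge : u ≤ u' := by
      by_contra hc
      push_neg at hc
      have h1 : u' * m ≤ v * m := Nat.mul_le_mul_right _ (by omega)
      omega
    have htl' := tf_le q u'
    have htg' := le_tf q u'
    set d' := tf q u' with hd'
    have hd't : d' ≤ t := by
      have h1 : u' + q < (t+1) * (q+1) := by
        have e2 : (t+1) * (q+1) = t * q + t + q + 1 := by ring
        omega
      have h2 : (u' + q) / (q + 1) < t + 1 := by
        rw [Nat.div_lt_iff_lt_mul (by omega)]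
        calc u' + q < (t+1) * (q+1) := h1
        _ = (t+1) * (q+1) := rfl
      have : d' = (u' + q) / (q+1) := rfl
      omega
    have hrep' : q * d' ≤ u' := by
      have h1 : q * d' ≤ q * t := Nat.mul_le_mul_left _ hd't
      have h2 : q * t = t * q := by ring
      omega
    have hF'def : q * d' + (u' - q * d') = u' := by omega
    set F' := u' - q * d' with hF'
    have hjF' : j ≤ F' := by
      have h1 : q * d' ≤ q * t := Nat.mul_le_mul_left _ hd't
      have h2 : q * t = t * q := by ring
      omega
    have hF'd' : F' ≤ d' := by
      have he : (q+1) * d' = q * d' + d' := by ring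
      omega
    have hrx : u' * m ≤ x + j * M := by omega
    obtain ⟨e, he⟩ : ∃ e, u + e = u' := ⟨u' - u, by omega⟩
    have hu'm : u' * m = u * m + e * m := by rw [← he]; ring
    by_cases hrep : q * tf q u ≤ u
    · -- rep u
      set d := tf q u with hd
      have hFdef : q * d + (u - q * d) = u := by omega
      set F := u - q * d with hF
      have hgseq : gs q m M D u = M * (D - F) := by
        unfold gs
        rw [if_pos hrep]
      rw [hgseq] at hxhi
      rcases le_or_gt D F with hDF | hFD
      · have : D - F = 0 := by omega
        rw [this, Nat.mul_zero] at hxhi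
        omega
      · have hdd' : d ≤ d' := tf_mono q (by omega)
        have hqd : q * d ≤ q * d' := Nat.mul_le_mul_left _ hdd'
        have hFF' : F' ≤ F + e := by omega
        have f2 : j * M ≤ F' * M := Nat.mul_le_mul_right _ hjF'
        have f3 : F' * M ≤ (F + e) * M := Nat.mul_le_mul_right _ hFF'
        have f4 : (F + e) * M = F * M + e * M := by ring
        have f6 : e * M ≤ e * m := Nat.mul_le_mul_left _ (by omega)
        have f7 : M * (D - F) + M * F = M * D := by
          rw [← Nat.mul_add]
          congr 1
          omega
        have f11 : F * M = M * F := by ring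
        omega
      -- done rep case
    · -- non-rep u
      have hgseq : gs q m M D u = m := by
        unfold gs
        rw [if_neg hrep]
      rw [hgseq] at hxhi
      have hult : u < q * q := nonrep_lt q u hq hrep
      have he1 : 1 ≤ e := by
        rcases Nat.eq_zero_or_pos e with h0 | h1
        · exfalso
          apply hrep
          rw [h0, Nat.add_zero] at he
          rw [he]
          exact hrep'
        · exact h1
      rcases le_or_gt F' D with hF'D | hDF'
      · -- F' ≤ D: r ≥ e*m ≥ m > m-1 ≥ M*F' ≥ j*M
        have f2 : j * M ≤ F' * M := Nat.mul_le_mul_right _ hjF'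
        have f3 : F' * M ≤ D * M := Nat.mul_le_mul_right _ hF'D
        have f4 : D * M = M * D := by ring
        have f5 : m ≤ e * m := Nat.le_mul_of_pos_left m (by omega)
        omega
      · -- F' > D : size contradiction
        have h1 : e * D + 1 ≤ F' := by
          by_contra hc
          push_neg at hc
          have h2 : F' * M ≤ (e * D) * M := Nat.mul_le_mul_right _ (by omega)
          have h3 : (e * D) * M = e * (M * D) := by ring
          have h4 : e * m = e * (M * D) + e := by rw [hm]; ring
          have f2 : j * M ≤ F' * M := Nat.mul_le_mul_right _ hjF'
          omega
        have h2 : q * F' ≤ q * d' := Nat.mul_le_mul_left _ hF'd'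
        have h3 : q * (e * D + 1) ≤ q * F' := Nat.mul_le_mul_left _ h1
        have h4 : q * (e * D + 1) = q * (e * D) + q := by ring
        have h5 : 2 * (e * D) ≤ q * (e * D) := Nat.mul_le_mul_right _ hq
        have h6 : e * 1 ≤ e * D := Nat.mul_le_mul_left _ (by omega)
        have h7 : 1 * D ≤ e * D := Nat.mul_le_mul_right _ he1
        have h8 : e * 1 = e := by ring
        have h9 : 1 * D = D := by ring
        omega


lemma closure_eq (q m M : ℕ) (hq : 2 ≤ q) (hMm : M < m) :
    ((AddSubmonoid.closure (({q * m} : Set ℕ) ∪ {x : ℕ | ∃ k ≤ M, x + k = (q+1) * m})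
      : AddSubmonoid ℕ) : Set ℕ)
      = {x : ℕ | ∃ t j r : ℕ, j ≤ t ∧ r ≤ j * M ∧ x + r = (t * q + j) * m} := by
  have hmW : m ≤ (q+1) * m := by
    have := Nat.mul_le_mul_right m (show 1 ≤ q+1 by omega)
    simpa using this
  have hMW : M ≤ (q+1) * m := by omega
  apply Set.Subset.antisymm
  · -- closure ⊆ A
    intro x hx
    refine AddSubmonoid.closure_induction ?_ ?_ ?_ hx
    · rintro y (rfl | ⟨k, hk, hy⟩)
      · refine ⟨1, 0, 0, by omega, Nat.zero_le _, ?_⟩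
        have : (1 * q + 0) * m = q * m := by ring
        rw [this]; omega
      · refine ⟨1, 1, k, le_rfl, by simpa using hk, ?_⟩
        have : (1 * q + 1) * m = (q+1) * m := by ring
        rw [this]; exact hy
    · exact ⟨0, 0, 0, le_rfl, Nat.zero_le _, by simp⟩
    · rintro a b _ _ ⟨t1, j1, r1, h1, h2, h3⟩ ⟨t2, j2, r2, g1, g2, g3⟩
      refine ⟨t1 + t2, j1 + j2, r1 + r2, by omega, ?_, ?_⟩
      · have e : (j1 + j2) * M = j1 * M + j2 * M := by ring
        rw [e]; exact add_le_add h2 g2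
      · have e : ((t1 + t2) * q + (j1 + j2)) * m = (t1 * q + j1) * m + (t2 * q + j2) * m := by
          ring
        rw [e]; linarith
  · -- A ⊆ closure
    rintro x ⟨t, j, r, hjt, hr, hx⟩
    have key : ∀ jj rr yy, rr ≤ jj * M → yy + rr = jj * ((q+1) * m) →
        yy ∈ AddSubmonoid.closure (({q * m} : Set ℕ) ∪ {x : ℕ | ∃ k ≤ M, x + k = (q+1) * m}) := by
      intro jj
      induction jj with
      | zero =>
        intro rr yy h1 h2
        rw [zero_mul] at h1
        rw [zero_mul] at h2
        have : yy = 0 := by omega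
        rw [this]; exact zero_mem _
      | succ jj ih =>
        intro rr yy h1 h2
        set k := min rr M with hkdef
        have hk : k ≤ M := min_le_right _ _
        have hk2 : k ≤ rr := min_le_left _ _
        have hsm : (jj + 1) * M = jj * M + M := by ring
        have hsw : (jj + 1) * ((q+1) * m) = jj * ((q+1) * m) + (q+1) * m := by ring
        rw [hsm] at h1
        rw [hsw] at h2
        have hle : rr - k ≤ jj * M := by
          set a := jj * M
          omega
        have hle2 : rr - k ≤ jj * ((q+1) * m) :=
          le_trans hle (Nat.mul_le_mul_left _ (by omega))
        obtain ⟨z, hz⟩ : ∃ z, z + (rr - k) = jj * ((q+1) * m) :=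
          ⟨_, Nat.sub_add_cancel hle2⟩
        have hzmem := ih _ _ hle hz
        have hgen2 : (q+1) * m - k ∈
            AddSubmonoid.closure (({q * m} : Set ℕ) ∪ {x : ℕ | ∃ k ≤ M, x + k = (q+1) * m}) := by
          apply AddSubmonoid.subset_closure
          right
          exact ⟨k, hk, Nat.sub_add_cancel (le_trans hk hMW)⟩
        have hyy : yy = z + ((q+1) * m - k) := by
          set W := (q+1) * m
          set w1 := jj * W
          omega
        rw [hyy]
        exact add_mem hzmem hgen2
    obtain ⟨e, rfl⟩ : ∃ e, t = j + e := ⟨t - j, by omega⟩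
    have expand : ((j + e) * q + j) * m = e * (q * m) + j * ((q+1) * m) := by ring
    have hle3 : r ≤ j * ((q+1) * m) :=
      le_trans hr (Nat.mul_le_mul_left _ (by omega))
    obtain ⟨y, hy⟩ : ∃ y, y + r = j * ((q+1) * m) := ⟨_, Nat.sub_add_cancel hle3⟩
    have hxy : x = e * (q * m) + y := by
      rw [expand] at hx
      linarith
    have hb : q * m ∈
        AddSubmonoid.closure (({q * m} : Set ℕ) ∪ {x : ℕ | ∃ k ≤ M, x + k = (q+1) * m}) :=
      AddSubmonoid.subset_closure (Or.inl rfl)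
    have hbm := AddSubmonoid.nsmul_mem (S := AddSubmonoid.closure (({q * m} : Set ℕ) ∪ {x : ℕ | ∃ k ≤ M, x + k = (q+1) * m})) hb e
    rw [nsmul_eq_mul] at hbm
    rw [hxy]
    exact add_mem hbm (key j r y hr hy)


def Phi (D x : ℕ) : ℕ := ∑ i ∈ Finset.range x, (D - i)

lemma sum_range_mul {β : Type*} [AddCommMonoid β] (f : ℕ → β) (a b : ℕ) :
    ∑ i ∈ Finset.range (a * b), f i
      = ∑ x ∈ Finset.range a, ∑ y ∈ Finset.range b, f (x * b + y) := by
  induction a with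
  | zero => simp
  | succ a ih =>
    rw [Finset.sum_range_succ, ← ih, Nat.succ_mul, Finset.range_eq_Ico,
      ← Finset.sum_Ico_consecutive f (Nat.zero_le (a * b)) (Nat.le_add_right _ b),
      ← Finset.range_eq_Ico, Finset.sum_Ico_eq_sum_range]
    congr 1
    simp

lemma tf_eval (q t' s : ℕ) (hs : s ≤ q) : tf q (t' * (q+1) + s + 1) = t' + 1 := by
  show (t' * (q+1) + s + 1 + q) / (q + 1) = t' + 1
  apply Nat.div_eq_of_lt_le
  · have : (t'+1) * (q+1) = t' * (q+1) + q + 1 := by ring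
    omega
  · have : (t'+1+1) * (q+1) = t' * (q+1) + 2*q + 2 := by ring
    omega

lemma gs_eval (q m M D t' s : ℕ) (hs : s ≤ q) :
    gs q m M D (t' * (q+1) + s + 1)
      = if q ≤ t' + s + 1 then M * (D - (t' + s + 1 - q)) else m := by
  unfold gs
  rw [tf_eval q t' s hs]
  have e1 : q * (t'+1) = t' * q + q := by ring
  have e2 : t' * (q+1) = t' * q + t' := by ring
  by_cases h : q ≤ t' + s + 1
  · rw [if_pos (by omega), if_pos h]
    congr 2
    omega
  · rw [if_neg (by omega), if_neg h]

lemma inner_sum (q m M D t' : ℕ) :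
    ∑ s ∈ Finset.range (q+1), gs q m M D (t' * (q+1) + s + 1)
      = (q - (t'+1)) * m + M * ∑ i ∈ Finset.Ico (t' + 1 - q) (t'+2), (D - i) := by
  set p := q - (t'+1) with hp
  have hpq : p ≤ q + 1 := by omega
  rw [Finset.range_eq_Ico, ← Finset.sum_Ico_consecutive _ (Nat.zero_le p) hpq]
  have h1 : ∑ s ∈ Finset.Ico 0 p, gs q m M D (t' * (q+1) + s + 1)
      = ∑ _s ∈ Finset.Ico 0 p, m := by
    apply Finset.sum_congr rfl
    intro s hs
    rw [Finset.mem_Ico] at hs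
    rw [gs_eval q m M D t' s (by omega), if_neg (by omega)]
  have h2 : ∑ s ∈ Finset.Ico p (q+1), gs q m M D (t' * (q+1) + s + 1)
      = ∑ s ∈ Finset.Ico p (q+1), M * (D - (t' + s + 1 - q)) := by
    apply Finset.sum_congr rfl
    intro s hs
    rw [Finset.mem_Ico] at hs
    rw [gs_eval q m M D t' s (by omega), if_pos (by omega)]
  rw [h1, h2, Finset.sum_const, Nat.card_Ico, Finset.sum_Ico_eq_sum_range]
  have h3 : ∀ k, M * (D - (t' + (p + k) + 1 - q)) = M * (D - ((t' + 1 - q) + k)) := by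
    intro k
    congr 2
    omega
  rw [Finset.sum_congr rfl (fun k _ => h3 k)]
  have h4 : q + 1 - p = (t' + 2) - (t' + 1 - q) := by omega
  rw [h4, ← Finset.mul_sum, Finset.sum_Ico_eq_sum_range]
  simp [smul_eq_mul]

lemma phi_stable (D b : ℕ) (h : D + 1 ≤ b) : Phi D b = Phi D (D+1) := by
  unfold Phi
  rw [Finset.range_eq_Ico, ← Finset.sum_Ico_consecutive _ (Nat.zero_le (D+1)) h,
    ← Finset.range_eq_Ico]
  have : ∑ i ∈ Finset.Ico (D+1) b, (D - i) = 0 := by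
    apply Finset.sum_eq_zero
    intro i hi
    rw [Finset.mem_Ico] at hi
    omega
  omega

lemma phi_one (D : ℕ) : Phi D 1 = D := by simp [Phi]

lemma two_phi (D : ℕ) : 2 * Phi D (D+1) = D * (D+1) := by
  have h1 : Phi D (D+1) = ∑ j ∈ Finset.range (D+1), j := by
    unfold Phi
    rw [← Finset.sum_range_reflect (fun j => j) (D+1)]
    apply Finset.sum_congr rfl
    intro i hi
    rw [Finset.mem_range] at hi
    omega
  have h2 := Finset.sum_range_id_mul_two (D+1)
  have h3 : (D+1) * (D+1-1) = D * (D+1) := by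
    have : D + 1 - 1 = D := by omega
    rw [this]; ring
  omega

lemma sum_gs (q m M D : ℕ) (hq : 2 ≤ q) (hD : D + q = q * q) (hm : m = M * D + 1) :
    2 * (∑ v ∈ Finset.range (q * q * (q+1)), gs q m M D (v + 1)) + 2 * (M * D) + q * m
      = q * q * m + M * ((q+1) * (D * (D+1))) := by
  have hqW : q ≤ q * q := Nat.le_mul_of_pos_left q (by omega)
  set W := q * q with hW
  rw [sum_range_mul (fun i => gs q m M D (i + 1)) W (q+1)]
  have hin : ∀ t' ∈ Finset.range W,
      (∑ y ∈ Finset.range (q+1), gs q m M D (t' * (q+1) + y + 1))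
        = (q - (t'+1)) * m + M * ∑ i ∈ Finset.Ico (t' + 1 - q) (t'+2), (D - i) := by
    intro t' _
    exact inner_sum q m M D t'
  rw [Finset.sum_congr rfl hin, Finset.sum_add_distrib, ← Finset.sum_mul, ← Finset.mul_sum]
  -- part 1 : the (q - (t'+1)) sum
  set P := ∑ t' ∈ Finset.range W, (q - (t'+1)) with hP
  have h2P : 2 * P = D := by
    have hsplit : P = ∑ t' ∈ Finset.range (q-1), (q - (t'+1)) := by
      rw [hP, Finset.range_eq_Ico,
        ← Finset.sum_Ico_consecutive _ (Nat.zero_le (q-1)) (show q-1 ≤ W by omega),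
        ← Finset.range_eq_Ico]
      have : ∑ t' ∈ Finset.Ico (q-1) W, (q - (t'+1)) = 0 := by
        apply Finset.sum_eq_zero
        intro i hi
        rw [Finset.mem_Ico] at hi
        omega
      omega
    have hrefl : ∑ t' ∈ Finset.range (q-1), (q - (t'+1))
        = ∑ t' ∈ Finset.range (q-1), (t'+1) := by
      rw [← Finset.sum_range_reflect (fun j => j + 1) (q-1)]
      apply Finset.sum_congr rfl
      intro i hi
      rw [Finset.mem_range] at hi
      omega
    have hplus : ∑ t' ∈ Finset.range (q-1), (t'+1)
        = (∑ t' ∈ Finset.range (q-1), t') + (q-1) := by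
      rw [Finset.sum_add_distrib, Finset.sum_const, Finset.card_range, smul_eq_mul, mul_one]
    have hgauss := Finset.sum_range_id_mul_two (q-1)
    obtain ⟨c, rfl⟩ : ∃ c, q = c + 2 := ⟨q - 2, by omega⟩
    have e1 : (c+2-1) * (c+2-1-1) = c * c + c := by
      simp only [show c+2-1 = c+1 from by omega, show c+1-1 = c from by omega]
      ring
    have e2 : (c+2) * (c+2) = c * c + 4 * c + 4 := by ring
    omega
  -- part 2 : the K sum
  set K := ∑ t' ∈ Finset.range W, ∑ i ∈ Finset.Ico (t' + 1 - q) (t'+2), (D - i) with hK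
  have h2K : K + D = (q+1) * Phi D (D+1) := by
    have key1 : ∀ t', Phi D (t' + 1 - q) + (∑ i ∈ Finset.Ico (t' + 1 - q) (t'+2), (D - i))
        = Phi D (t'+2) := by
      intro t'
      unfold Phi
      simp only [Finset.range_eq_Ico]
      exact Finset.sum_Ico_consecutive _ (Nat.zero_le _) (by omega)
    have hKsum : (∑ t' ∈ Finset.range W, Phi D (t' + 1 - q)) + K
        = ∑ t' ∈ Finset.range W, Phi D (t'+2) := by
      rw [hK, ← Finset.sum_add_distrib]
      exact Finset.sum_congr rfl fun t' _ => key1 t'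
    have hR : Phi D 0 + Phi D 1 + (∑ t' ∈ Finset.range W, Phi D (t'+2))
        = ∑ b ∈ Finset.range (W+2), Phi D b := by
      rw [Finset.sum_range_succ' (Phi D) (W+1), Finset.sum_range_succ' (fun i => Phi D (i+1)) W]
      have hcg : ∑ i ∈ Finset.range W, Phi D (i+1+1) = ∑ t' ∈ Finset.range W, Phi D (t'+2) :=
        Finset.sum_congr rfl fun i _ => by norm_num
      have h01 : Phi D (0+1) = Phi D 1 := by norm_num
      omega
    have hL : ∑ t' ∈ Finset.range W, Phi D (t' + 1 - q)
        = ∑ b ∈ Finset.range (W + 1 - q), Phi D b := by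
      have hWq : W + 1 - q = (W - q) + 1 := by omega
      rw [hWq, Finset.sum_range_succ' (Phi D) (W-q)]
      have hphi0 : Phi D 0 = 0 := by simp [Phi]
      rw [hphi0, add_zero]
      rw [Finset.range_eq_Ico, ← Finset.sum_Ico_consecutive _ (Nat.zero_le q) (show q ≤ W by omega)]
      have hz : ∑ t' ∈ Finset.Ico 0 q, Phi D (t' + 1 - q) = 0 := by
        apply Finset.sum_eq_zero
        intro i hi
        rw [Finset.mem_Ico] at hi
        have : i + 1 - q = 0 := by omega
        rw [this]
        simp [Phi]
      have hshift : ∑ t' ∈ Finset.Ico q W, Phi D (t' + 1 - q)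
          = ∑ k ∈ Finset.range (W - q), Phi D (k+1) := by
        rw [Finset.sum_Ico_eq_sum_range]
        apply Finset.sum_congr rfl
        intro i _
        congr 1
        omega
      rw [hz, hshift, zero_add, Finset.range_eq_Ico]
    have hsplit2 : (∑ b ∈ Finset.range (W + 1 - q), Phi D b)
        + (∑ b ∈ Finset.Ico (W + 1 - q) (W+2), Phi D b)
        = ∑ b ∈ Finset.range (W+2), Phi D b := by
      simp only [Finset.range_eq_Ico]
      exact Finset.sum_Ico_consecutive _ (Nat.zero_le _) (by omega)
    have hconst : ∑ b ∈ Finset.Ico (W + 1 - q) (W+2), Phi D b = (q+1) * Phi D (D+1) := by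
      have hc : ∀ b ∈ Finset.Ico (W + 1 - q) (W+2), Phi D b = Phi D (D+1) := by
        intro b hb
        rw [Finset.mem_Ico] at hb
        exact phi_stable D b (by omega)
      rw [Finset.sum_congr rfl hc, Finset.sum_const, Nat.card_Ico, smul_eq_mul]
      congr 1
      omega
    have hphi0 : Phi D 0 = 0 := by simp [Phi]
    have hphi1 : Phi D 1 = D := phi_one D
    omega
  -- combine
  have hfin1 : 2 * (P * m) = D * m := by
    rw [← h2P]; ring
  have hfin2 : 2 * (M * K) + 2 * (M * D) = M * ((q+1) * (D * (D+1))) := by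
    have e1 : 2 * (M * K) + 2 * (M * D) = M * (2 * (K + D)) := by ring
    rw [e1, h2K]
    have := two_phi D
    have e2 : M * (2 * ((q+1) * Phi D (D+1))) = M * ((q+1) * (2 * Phi D (D+1))) := by ring
    rw [e2, this]
  have hfin3 : D * m + q * m = W * m := by
    rw [← hD]; ring
  omega

end Stmt15

open Stmt15 in
/-- Let `q` be a prime power, `n ≥ 3` odd, `m = (q^n+1)/(q+1)`, `M = (m-1)/(q²-q)`, and
`S_Q ⊆ ℕ` the additive submonoid generated by `{q^n+1-m} ∪ {q^n+1-k : 0 ≤ k ≤ M}`.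
Then `ℕ \ S_Q` is finite of cardinality `(1/2)(q-1)(q^{n+1}+q^n-q²)`. -/
theorem stmt_15 (q n m M : ℕ) (hq : IsPrimePow q) (hn : 3 ≤ n) (hodd : Odd n)
    (hm : m * (q + 1) = q ^ n + 1) (hM : M * (q ^ 2 - q) = m - 1) :
    letI S_Q : AddSubmonoid ℕ := AddSubmonoid.closure
      ({q ^ n + 1 - m} ∪ {x : ℕ | ∃ k ≤ M, x = q ^ n + 1 - k})
    ((S_Q : Set ℕ)ᶜ).Finite ∧
      ((((S_Q : Set ℕ)ᶜ).ncard : ℚ)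
        = (1 / 2) * ((q : ℚ) - 1) * ((q : ℚ) ^ (n + 1) + (q : ℚ) ^ n - (q : ℚ) ^ 2)) := by
  have hq2 : 2 ≤ q := hq.two_le
  have hq3n : q ^ 3 ≤ q ^ n := Nat.pow_le_pow_right (by omega) hn
  have hq3 : q ^ 3 = q * q * q := by ring
  have hqq4 : 4 ≤ q * q := Nat.mul_le_mul hq2 hq2
  have hq1q3 : q + 1 < q ^ 3 := by
    rw [hq3]
    have h1 : 4 * q ≤ q * q * q := Nat.mul_le_mul_right _ hqq4
    omega
  have hm1 : 1 ≤ m := by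
    by_contra hc
    push_neg at hc
    have h0 : m = 0 := by omega
    rw [h0, zero_mul] at hm
    omega
  have hm2 : 2 ≤ m := by
    by_contra hc
    push_neg at hc
    have hmone : m = 1 := by omega
    rw [hmone, one_mul] at hm
    omega
  obtain ⟨D, hD⟩ : ∃ D, D + q = q * q :=
    ⟨q * q - q, by
      have : q ≤ q * q := Nat.le_mul_of_pos_left q (by omega)
      omega⟩
  have hD2 : 2 ≤ D := by
    have h1 : 2 * q ≤ q * q := Nat.mul_le_mul_right _ hq2
    omega
  have hqsq : q ^ 2 - q = D := by
    have h1 : q ^ 2 = q * q := by ring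
    omega
  rw [hqsq] at hM
  have hmD : m = M * D + 1 := by omega
  have hM1 : 1 ≤ M := by
    by_contra hc
    push_neg at hc
    have h0 : M = 0 := by omega
    rw [h0, zero_mul] at hM
    omega
  have hMm : M < m := by
    have h1 : M * 1 ≤ M * D := Nat.mul_le_mul_left _ (by omega)
    omega
  have hNm : q ^ n + 1 = m * (q + 1) := hm.symm
  have hgen : ({q ^ n + 1 - m} ∪ {x : ℕ | ∃ k ≤ M, x = q ^ n + 1 - k} : Set ℕ)
      = (({q * m} : Set ℕ) ∪ {x : ℕ | ∃ k ≤ M, x + k = (q + 1) * m}) := by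
    have hcm : m * (q + 1) = q * m + m := by ring
    have hcm2 : m * (q + 1) = (q + 1) * m := by ring
    ext x
    simp only [Set.mem_union, Set.mem_singleton_iff, Set.mem_setOf_eq]
    constructor
    · rintro (rfl | ⟨k, hk, rfl⟩)
      · left; omega
      · right; exact ⟨k, hk, by omega⟩
    · rintro (rfl | ⟨k, hk, hkx⟩)
      · left; omega
      · right; exact ⟨k, hk, by omega⟩
  have hSA : ((AddSubmonoid.closure
        ({q ^ n + 1 - m} ∪ {x : ℕ | ∃ k ≤ M, x = q ^ n + 1 - k}) : AddSubmonoid ℕ) : Set ℕ)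
      = {x : ℕ | ∃ t j r : ℕ, j ≤ t ∧ r ≤ j * M ∧ x + r = (t * q + j) * m} := by
    rw [hgen]
    exact closure_eq q m M hq2 hMm
  have hcompl := compl_eq q m M D hq2 hD hD2 hmD hM1
  have hdisjkey : ∀ a b : ℕ, a < b →
      Disjoint (Finset.Ico (a * m + 1) (a * m + 1 + gs q m M D (a + 1)))
        (Finset.Ico (b * m + 1) (b * m + 1 + gs q m M D (b + 1))) := by
    intro a b hlt
    rw [Finset.disjoint_left]
    intro x hx1 hx2
    rw [Finset.mem_Ico] at hx1 hx2
    have h1 : gs q m M D (a + 1) ≤ m := gs_le q m M D (a + 1) hmD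
    have h2 : (a + 1) * m ≤ b * m := Nat.mul_le_mul_right _ (by omega)
    have h3 : (a + 1) * m = a * m + m := by ring
    omega
  have main : ((AddSubmonoid.closure
        ({q ^ n + 1 - m} ∪ {x : ℕ | ∃ k ≤ M, x = q ^ n + 1 - k}) : AddSubmonoid ℕ) : Set ℕ)ᶜ.Finite ∧
      ((((AddSubmonoid.closure
        ({q ^ n + 1 - m} ∪ {x : ℕ | ∃ k ≤ M, x = q ^ n + 1 - k}) : AddSubmonoid ℕ) : Set ℕ)ᶜ.ncard : ℚ)
        = (1 / 2) * ((q : ℚ) - 1) * ((q : ℚ) ^ (n + 1) + (q : ℚ) ^ n - (q : ℚ) ^ 2)) := by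
    rw [hSA, hcompl]
    constructor
    · exact Finset.finite_toSet _
    · rw [Set.ncard_coe_finset]
      rw [Finset.card_biUnion (fun a _ b _ hab => by
        rcases lt_or_gt_of_ne hab with h | h
        · exact hdisjkey a b h
        · exact (hdisjkey b a h).symm)]
      have hcardI : ∀ v ∈ Finset.range (q * q * (q + 1)),
          (Finset.Ico (v * m + 1) (v * m + 1 + gs q m M D (v + 1))).card
            = gs q m M D (v + 1) := by
        intro v _
        rw [Nat.card_Ico]
        omega
      rw [Finset.sum_congr rfl hcardI]
      have hT := sum_gs q m M D hq2 hD hmD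
      set T := ∑ v ∈ Finset.range (q * q * (q + 1)), gs q m M D (v + 1) with hTdef
      have hTQ : 2 * (T : ℚ) + 2 * ((M : ℚ) * D) + (q : ℚ) * m
          = (q : ℚ) * q * m + (M : ℚ) * (((q : ℚ) + 1) * ((D : ℚ) * ((D : ℚ) + 1))) := by
        exact_mod_cast hT
      have hDQ : (D : ℚ) = (q : ℚ) * q - q := by
        have h1 : ((D : ℚ) + q) = (q : ℚ) * q := by exact_mod_cast hD
        linarith
      have hmQ : (m : ℚ) = (M : ℚ) * ((q : ℚ) * q - q) + 1 := by
        have h1 : (m : ℚ) = (M : ℚ) * D + 1 := by exact_mod_cast hmD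
        rw [h1, hDQ]
      have hXQ : ((q : ℚ)) ^ n = (m : ℚ) * ((q : ℚ) + 1) - 1 := by
        have h1 : (m : ℚ) * ((q : ℚ) + 1) = (q : ℚ) ^ n + 1 := by exact_mod_cast hm
        linarith
      rw [pow_succ, hXQ, hmQ]
      rw [hDQ, hmQ] at hTQ
      linear_combination hTQ / 2
  exact main
end

section
/- Let q ≥ 2 and n ≥ 3 be integers with n odd, m := (q^n+1)/(q+1), M := (m−1)/(q²−q), and let S_Q ⊆ ℕ be the additive submonoid of ℕ generated by the set {q^n+1−m} ∪ {q^n+1−k : 0 ≤ k ≤ M}. Then for every integer k with 1 ≤ k ≤ q^n, it is not the case that both k ∈ S_Q and q^n+1−k ∈ S_Q. -/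
/-- Let `q ≥ 2`, `n ≥ 3` odd, `m = (q^n+1)/(q+1)`, `M = (m-1)/(q²-q)`, and
`S_Q ⊆ ℕ` the additive submonoid generated by `{q^n+1-m} ∪ {q^n+1-k : 0 ≤ k ≤ M}`.
Then for every `k` with `1 ≤ k ≤ q^n`, not both `k ∈ S_Q` and `q^n+1-k ∈ S_Q`. -/
theorem stmt_16 (q n m M : ℕ) (hq : 2 ≤ q) (hn : 3 ≤ n) (hodd : Odd n)
    (hm : m * (q + 1) = q ^ n + 1) (hM : M * (q ^ 2 - q) = m - 1) :
    ∀ k : ℕ, 1 ≤ k → k ≤ q ^ n →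
      ¬(k ∈ AddSubmonoid.closure
            ({q ^ n + 1 - m} ∪ {x : ℕ | ∃ j ≤ M, x = q ^ n + 1 - j}) ∧
        q ^ n + 1 - k ∈ AddSubmonoid.closure
            ({q ^ n + 1 - m} ∪ {x : ℕ | ∃ j ≤ M, x = q ^ n + 1 - j})) := by
  intro k hk1 hk2 ⟨hkS, hkS'⟩
  set N := q ^ n + 1 with hN
  have hm0 : 0 < m := by
    rcases Nat.eq_zero_or_pos m with h | h
    · exfalso; rw [h, zero_mul] at hm; omega
    · exact h
  have hMm : M ≤ m - 1 := by
    have hq2 : q + 2 ≤ q ^ 2 := by nlinarith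
    have h2 : 2 ≤ q ^ 2 - q := by omega
    calc M = M * 1 := (mul_one M).symm
      _ ≤ M * (q ^ 2 - q) := Nat.mul_le_mul_left M (by omega)
      _ = m - 1 := hM
  have h2m : 2 * m < N := by
    have : 3 * m ≤ m * (q + 1) := by nlinarith
    omega
  -- every nonzero element of the closure is ≥ N - m
  have key : ∀ x ∈ AddSubmonoid.closure
      ({N - m} ∪ {x : ℕ | ∃ j ≤ M, x = N - j}), x = 0 ∨ N - m ≤ x := by
    intro x hx
    refine AddSubmonoid.closure_induction ?_ (Or.inl rfl) ?_ hx
    · rintro y (hy | ⟨j, hj, rfl⟩)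
      · right; simp at hy; omega
      · right
        have : j ≤ m := by omega
        omega
    · rintro a b _ _ (rfl | ha) (rfl | hb) <;> simp <;> omega
  have hk0 : k ≠ 0 := by omega
  have hNk0 : N - k ≠ 0 := by omega
  have h1 := key k hkS
  have h2 := key (N - k) hkS'
  omega
end
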